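/- arXiv:1204.5519 — 6 statements merged into one kernel-verified Lean document; each statement's English description precedes it below -/
import Mathlib

section
/- Fix finite nonempty sets Θ, Ω, A and a utility function u : Θ × Ω × A → ℝ. Then for every probability distribution μ on Ω × Θ that is a product distribution (μ(ω,θ) = μ(ω)·μ(θ) for all ω,θ) with μ(ω) > 0 for all ω, and every valid Pricing Mappings menu with revenue R, there exists a valid Pricing Mappings menu all of whose posteriors lie in the finite set Q*(u) and whose revenue is at least R. Moreover, if u takes only rational values, then every element of Q*(u) has rational coordinates. -/
open Finset Filter

noncomputable section

variable {Θ Ω A : Type*}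

/-- `p` is a probability distribution on the finite set `Ω`. -/
def IsDist [Fintype Ω] (p : Ω → ℝ) : Prop :=
  (∀ ω, 0 ≤ p ω) ∧ ∑ ω, p ω = 1

/-- `μ` is a joint probability distribution on `Ω × Θ`. -/
def IsJoint [Fintype Ω] [Fintype Θ] (μ : Ω → Θ → ℝ) : Prop :=
  (∀ ω θ, 0 ≤ μ ω θ) ∧ ∑ ω, ∑ θ, μ ω θ = 1

/-- The marginal `μ(ω) = ∑_θ μ(ω,θ)` of a joint distribution. -/
def margO [Fintype Θ] (μ : Ω → Θ → ℝ) (ω : Ω) : ℝ := ∑ θ, μ ω θ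

/-- The marginal `μ(θ) = ∑_ω μ(ω,θ)` of a joint distribution. -/
def margT [Fintype Ω] (μ : Ω → Θ → ℝ) (θ : Θ) : ℝ := ∑ ω, μ ω θ

/-- The value function `v_θ(q) = max_{a ∈ A} ∑_ω q(ω)·u(θ,ω,a)`. -/
def vfun [Fintype Ω] [Fintype A] [Nonempty A] (u : Θ → Ω → A → ℝ) (θ : Θ) (q : Ω → ℝ) : ℝ :=
  univ.sup' univ_nonempty fun a => ∑ ω, q ω * u θ ω a

/-- The matrix-vector product `D_θ q`, where `D_θ` is the diagonal matrix with entries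
`μ(θ|ω) = μ(ω,θ)/μ(ω)`. -/
def Dq [Fintype Θ] (μ : Ω → Θ → ℝ) (θ : Θ) (q : Ω → ℝ) : Ω → ℝ :=
  fun ω => μ ω θ / margO μ ω * q ω

/-- `1ᵀ D_θ q`. -/
def onesD [Fintype Θ] [Fintype Ω] (μ : Ω → Θ → ℝ) (θ : Θ) (q : Ω → ℝ) : ℝ :=
  ∑ ω, Dq μ θ q ω

/-- A feasible signal-representation for prior `pr`: a finitely supported distribution over
posteriors (each posterior being a distribution on `Ω`) averaging to the prior. -/
def FeasRep [Fintype Ω] (pr : Ω → ℝ) (x : (Ω → ℝ) →₀ ℝ) : Prop :=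
  (∀ q ∈ x.support, IsDist q) ∧ (∀ q, 0 ≤ x q) ∧
  (∑ q ∈ x.support, x q = 1) ∧ ∀ ω, ∑ q ∈ x.support, x q * q ω = pr ω

variable [Fintype Θ] [Fintype Ω] [Fintype A] [Nonempty A]

/-- Expected value `∑_q v_θ(D_θ q)·x(q)` that a type-`θ` buyer gets from
signal representation `x`. -/
def PMutil (u : Θ → Ω → A → ℝ) (μ : Ω → Θ → ℝ) (θ : Θ) (x : (Ω → ℝ) →₀ ℝ) : ℝ :=
  ∑ q ∈ x.support, vfun u θ (Dq μ θ q) * x q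

/-- Validity (IR and IC) of a Pricing Mappings menu `{(x_θ, t_θ)}`. -/
def PMvalid (u : Θ → Ω → A → ℝ) (μ : Ω → Θ → ℝ)
    (x : Θ → ((Ω → ℝ) →₀ ℝ)) (t : Θ → ℝ) : Prop :=
  (∀ θ, FeasRep (margO μ) (x θ)) ∧ (∀ θ, 0 ≤ t θ) ∧
  (∀ θ, vfun u θ (Dq μ θ (margO μ)) ≤ PMutil u μ θ (x θ) - margT μ θ * t θ) ∧
  (∀ θ θ', θ' ≠ θ →
    PMutil u μ θ (x θ') - margT μ θ * t θ' ≤ PMutil u μ θ (x θ) - margT μ θ * t θ)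

/-- Revenue `∑_θ μ(θ)·t_θ` of a Pricing Mappings menu. -/
def PMrev (μ : Ω → Θ → ℝ) (t : Θ → ℝ) : ℝ := ∑ θ, margT μ θ * t θ

/-- `R_c(u,μ)`: the supremum of revenues of valid Pricing Mappings menus. -/
def Rc (u : Θ → Ω → A → ℝ) (μ : Ω → Θ → ℝ) : ℝ :=
  sSup {r | ∃ x t, PMvalid u μ x t ∧ r = PMrev μ t}

/-- Net utility `∑_q [v_θ(D_θ q)·x(q) − (1ᵀD_θ q)·t̃(q)]` of a type-`θ` buyer
from a Pricing Outcomes contract `(x, tt)`. -/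
def POutil (u : Θ → Ω → A → ℝ) (μ : Ω → Θ → ℝ) (θ : Θ)
    (x tt : (Ω → ℝ) →₀ ℝ) : ℝ :=
  ∑ q ∈ x.support ∪ tt.support,
    (vfun u θ (Dq μ θ q) * x q - onesD μ θ q * tt q)

/-- Validity (feasibility, payments supported on signals, IR and IC) of a Pricing Outcomes
menu `{(x_θ, t̃_θ)}`. -/
def POvalid (u : Θ → Ω → A → ℝ) (μ : Ω → Θ → ℝ)
    (x tt : Θ → ((Ω → ℝ) →₀ ℝ)) : Prop :=
  (∀ θ, FeasRep (margO μ) (x θ)) ∧ (∀ θ, (tt θ).support ⊆ (x θ).support) ∧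
  (∀ θ, vfun u θ (Dq μ θ (margO μ)) ≤ POutil u μ θ (x θ) (tt θ)) ∧
  (∀ θ θ', θ' ≠ θ →
    POutil u μ θ (x θ') (tt θ') ≤ POutil u μ θ (x θ) (tt θ))

/-- Revenue `∑_θ ∑_q (1ᵀD_θ q)·t̃_θ(q)` of a Pricing Outcomes menu. -/
def POrev (μ : Ω → Θ → ℝ) (tt : Θ → ((Ω → ℝ) →₀ ℝ)) : ℝ :=
  ∑ θ, ∑ q ∈ (tt θ).support, onesD μ θ q * tt θ q

/-- `R(u,μ)`: the supremum of revenues of valid Pricing Outcomes menus. -/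
def Rfull (u : Θ → Ω → A → ℝ) (μ : Ω → Θ → ℝ) : ℝ :=
  sSup {r | ∃ x tt, POvalid u μ x tt ∧ r = POrev μ tt}

/-- `R_p(u,μ)`: the supremum of revenues of valid Pricing Outcomes menus with no positive
transfers to the buyer, i.e. all payments nonnegative. -/
def Rp (u : Θ → Ω → A → ℝ) (μ : Ω → Θ → ℝ) : ℝ :=
  sSup {r | ∃ x tt, POvalid u μ x tt ∧ (∀ θ q, 0 ≤ tt θ q) ∧ r = POrev μ tt}

/-- `max_a u(θ,ω,a)`. -/
def maxU (u : Θ → Ω → A → ℝ) (θ : Θ) (ω : Ω) : ℝ :=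
  univ.sup' univ_nonempty fun a => u θ ω a

/-- The buyer surplus
`σ(θ) = ∑_ω μ(ω|θ)·max_a u(θ,ω,a) − max_a ∑_ω μ(ω|θ)·u(θ,ω,a)`. -/
def surplus (u : Θ → Ω → A → ℝ) (μ : Ω → Θ → ℝ) (θ : Θ) : ℝ :=
  ∑ ω, μ ω θ / margT μ θ * maxU u θ ω -
    univ.sup' univ_nonempty fun a => ∑ ω, μ ω θ / margT μ θ * u θ ω a

/-- The full surplus `∑_θ μ(θ)·σ(θ)`. -/
def fullSurplus (u : Θ → Ω → A → ℝ) (μ : Ω → Θ → ℝ) : ℝ :=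
  ∑ θ, margT μ θ * surplus u μ θ

/-- The sealed-envelope revenue `R_e(u,μ) = sup_{t ≥ 0} t·∑_{θ : μ(θ)>0, σ(θ) ≥ t} μ(θ)`. -/
def Re (u : Θ → Ω → A → ℝ) (μ : Ω → Θ → ℝ) : ℝ :=
  sSup {r | ∃ t : ℝ, 0 ≤ t ∧
    r = t * ∑ θ, (if 0 < margT μ θ ∧ t ≤ surplus u μ θ then margT μ θ else 0)}

/-- The cell of the simplex on which, for each type `θ`, action `α θ` is optimal:
on this polytope every `v_θ` is linear. -/
def cellPM (u : Θ → Ω → A → ℝ) (α : Θ → A) : Set (Ω → ℝ) :=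
  {q | IsDist q ∧ ∀ θ a, ∑ ω, q ω * u θ ω a ≤ ∑ ω, q ω * u θ ω (α θ)}

/-- `Q*(u)`: the set of vertices (extreme points) of the cells of the partition of the simplex
into polytopes on which every `v_θ` is linear. -/
def Qstar (u : Θ → Ω → A → ℝ) : Set (Ω → ℝ) :=
  ⋃ α : Θ → A, Set.extremePoints ℝ (cellPM u α)

/-- The cell of the simplex on which, for each type `θ`, action `α θ` is optimal for the
transformed posterior `D_θ q`: on this polytope every `q ↦ v_θ(D_θ q)` is linear. -/
def cellPO (u : Θ → Ω → A → ℝ) (μ : Ω → Θ → ℝ) (α : Θ → A) : Set (Ω → ℝ) :=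
  {q | IsDist q ∧ ∀ θ a, ∑ ω, Dq μ θ q ω * u θ ω a ≤ ∑ ω, Dq μ θ q ω * u θ ω (α θ)}

/-- `Q*(u,μ)`: the set of vertices (extreme points) of the cells of the partition of the simplex
into polytopes on which every `q ↦ v_θ(D_θ q)` is linear. -/
def QstarD (u : Θ → Ω → A → ℝ) (μ : Ω → Θ → ℝ) : Set (Ω → ℝ) :=
  ⋃ α : Θ → A, Set.extremePoints ℝ (cellPO u μ α)

/-- The point mass at `ω`, as an element of `Δ(Ω)`. -/
def deltaP [DecidableEq Ω] (ω : Ω) : Ω → ℝ := fun ω' => if ω' = ω then 1 else 0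

/-- The full-revelation signal representation: posterior `δ_ω` with probability `μ(ω)`. -/
def fullX [DecidableEq Ω] (μ : Ω → Θ → ℝ) : (Ω → ℝ) →₀ ℝ :=
  ∑ ω, Finsupp.single (deltaP ω) (margO μ ω)

/-- The full-revelation payment function: `t̃(δ_ω) = μ(ω)·t(ω)`. -/
def fullT [DecidableEq Ω] (μ : Ω → Θ → ℝ) (t : Ω → ℝ) : (Ω → ℝ) →₀ ℝ :=
  ∑ ω, Finsupp.single (deltaP ω) (margO μ ω * t ω)

end

/-!
On a cell of the partition every `v_θ` is linear, and a cell is a polytope, the convex hull of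
its finitely many vertices (Krein–Milman). Splitting every posterior of a menu into vertices of a
cell containing it therefore keeps each signal feasible and preserves `∑_q v_θ(q)·x(q)` for every
`θ`. For a product distribution `D_θ = μ(θ)·I`, so `v_θ(D_θ q) = μ(θ)·v_θ(q)` and every type values
every menu item exactly as before: IR, IC and the prices carry over.

A vertex `q` of a cell admits no nonzero direction `d` keeping all constraints active at `q`
active, since `q ± s·d` would stay in the cell for small `s`. Two vertices with the same active
constraints differ by such a direction, so there are finitely many; and if `q(ω)` were irrational,
a `ℚ`-linear `ψ : ℝ → ℚ` with `ψ 1 = 0`, `ψ (q ω) ≠ 0` applied coordinatewise to a rational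
system would give one.
-/

open Topology

lemma eventually_add_mul_le_add_mul {a b c d : ℝ} (h : a ≤ c) (htight : a = c → b = d) :
    ∀ᶠ s in 𝓝 (0 : ℝ), a + s * b ≤ c + s * d := by
  rcases h.lt_or_eq with hlt | heq
  · exact (ContinuousAt.eventually_lt (by fun_prop) (by fun_prop) (by simpa using hlt)).mono
      fun _ => le_of_lt
  · simp [heq, htight heq]

lemma eq_zero_of_mem_extremePoints_of_eventually {E : Type*} [AddCommGroup E] [Module ℝ E]
    {P : Set E} {q d : E} (hq : q ∈ P.extremePoints ℝ)
    (hd : ∀ᶠ s in 𝓝 (0 : ℝ), q + s • d ∈ P) : d = 0 := by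
  have hneg : ∀ᶠ s in 𝓝 (0 : ℝ), q + (-s) • d ∈ P :=
    (continuous_neg.tendsto' (0 : ℝ) 0 neg_zero).eventually hd
  obtain ⟨s, ⟨hplus, hminus⟩, hs⟩ :=
    (((hd.and hneg).filter_mono nhdsWithin_le_nhds).and
      (self_mem_nhdsWithin (s := {(0 : ℝ)}ᶜ))).exists
  have hseg : q ∈ openSegment ℝ (q + s • d) (q + (-s) • d) :=
    ⟨1 / 2, 1 / 2, by norm_num, by norm_num, by norm_num, by module⟩
  have hsd : s • d = 0 := by simpa using hq.2 hplus hminus hseg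
  exact (smul_eq_zero.1 hsd).resolve_left hs

lemma Irrational.exists_linearMap_rat {x : ℝ} (hx : Irrational x) :
    ∃ ψ : ℝ →ₗ[ℚ] ℚ, ψ 1 = 0 ∧ ψ x ≠ 0 := by
  have hx' : x ∉ ℚ ∙ (1 : ℝ) := by
    rw [Submodule.mem_span_singleton]
    rintro ⟨r, hr⟩
    exact hx ⟨r, by simpa [Rat.smul_def] using hr⟩
  obtain ⟨ψ, hψx, hψ⟩ := Submodule.exists_dual_map_eq_bot_of_notMem hx' inferInstance
  refine ⟨ψ, ?_, hψx⟩
  have h1 : ψ 1 ∈ (ℚ ∙ (1 : ℝ)).map ψ :=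
    Submodule.mem_map_of_mem (Submodule.mem_span_singleton_self 1)
  simpa [hψ] using h1

section Cell

variable {Θ Ω A : Type*} [Fintype Ω] {u : Θ → Ω → A → ℝ} {α : Θ → A} {q d : Ω → ℝ}

def KeepsActive (u : Θ → Ω → A → ℝ) (α : Θ → A) (q d : Ω → ℝ) : Prop :=
  ∑ ω, d ω = 0 ∧ (∀ ω, q ω = 0 → d ω = 0) ∧
    ∀ θ a, ∑ ω, q ω * u θ ω a = ∑ ω, q ω * u θ ω (α θ) →
      ∑ ω, d ω * u θ ω a = ∑ ω, d ω * u θ ω (α θ)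

lemma sum_add_smul_mul (q d c : Ω → ℝ) (s : ℝ) :
    ∑ ω, (q + s • d) ω * c ω = ∑ ω, q ω * c ω + s * ∑ ω, d ω * c ω := by
  simp only [Pi.add_apply, Pi.smul_apply, smul_eq_mul, add_mul, sum_add_distrib, mul_sum,
    mul_assoc]

lemma KeepsActive.eventually_add_smul_mem [Finite Θ] [Finite A] (hq : q ∈ cellPM u α)
    (hd : KeepsActive u α q d) :
    ∀ᶠ s in 𝓝 (0 : ℝ), q + s • d ∈ cellPM u α := by
  obtain ⟨hsum, hzero, htight⟩ := hd
  have hnonneg : ∀ᶠ s in 𝓝 (0 : ℝ), ∀ ω, 0 + s * 0 ≤ q ω + s * d ω :=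
    eventually_all.2 fun ω =>
      eventually_add_mul_le_add_mul (hq.1.1 ω) fun h => (hzero ω h.symm).symm
  have hopt : ∀ᶠ s in 𝓝 (0 : ℝ), ∀ θ a,
      ∑ ω, q ω * u θ ω a + s * ∑ ω, d ω * u θ ω a ≤
        ∑ ω, q ω * u θ ω (α θ) + s * ∑ ω, d ω * u θ ω (α θ) :=
    eventually_all.2 fun θ => eventually_all.2 fun a =>
      eventually_add_mul_le_add_mul (hq.2 θ a) (htight θ a)
  filter_upwards [hnonneg, hopt] with s hs_nonneg hs_opt
  refine ⟨⟨fun ω => by simpa using hs_nonneg ω, ?_⟩, fun θ a => ?_⟩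
  · simp [sum_add_distrib, ← mul_sum, hsum, hq.1.2]
  · simpa only [sum_add_smul_mul] using hs_opt θ a

lemma KeepsActive.eq_zero [Finite Θ] [Finite A] (hq : q ∈ (cellPM u α).extremePoints ℝ)
    (hd : KeepsActive u α q d) : d = 0 :=
  eq_zero_of_mem_extremePoints_of_eventually hq (hd.eventually_add_smul_mem hq.1)

lemma finite_extremePoints_cellPM [Finite Θ] [Finite A] (u : Θ → Ω → A → ℝ) (α : Θ → A) :
    ((cellPM u α).extremePoints ℝ).Finite := by
  let activeSet : (Ω → ℝ) → Set Ω × Set (Θ × A) := fun q =>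
    ({ω | q ω = 0}, {p | ∑ ω, q ω * u p.1 ω p.2 = ∑ ω, q ω * u p.1 ω (α p.1)})
  refine Set.Finite.of_finite_image (f := activeSet) (Set.toFinite _) fun q hq q' hq' h => ?_
  simp only [activeSet, Prod.mk.injEq, Set.ext_iff, Set.mem_ofPred_eq, Prod.forall] at h
  obtain ⟨hzero, htight⟩ := h
  refine sub_eq_zero.1 (KeepsActive.eq_zero hq ⟨?_, fun ω h => ?_, fun θ a h => ?_⟩)
  · simp [sum_sub_distrib, hq.1.1.2, hq'.1.1.2]
  · simp [h, (hzero ω).1 h]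
  · simp only [Pi.sub_apply, sub_mul, sum_sub_distrib, h, (htight θ a).1 h]

lemma exists_ratCast_of_mem_extremePoints_cellPM [Finite Θ] [Finite A]
    (hu : ∀ θ ω a, ∃ r : ℚ, u θ ω a = r) (hq : q ∈ (cellPM u α).extremePoints ℝ) (ω₀ : Ω) :
    ∃ r : ℚ, q ω₀ = r := by
  by_contra! hirr
  obtain ⟨ψ, hψ1, hψq⟩ :=
    Irrational.exists_linearMap_rat (x := q ω₀) fun ⟨r, hr⟩ => hirr r hr.symm
  have hψ_sum_mul : ∀ θ a, ∑ ω, (ψ (q ω) : ℝ) * u θ ω a = ψ (∑ ω, q ω * u θ ω a) := by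
    intro θ a
    rw [map_sum, Rat.cast_sum]
    refine sum_congr rfl fun ω _ => ?_
    obtain ⟨r, hr⟩ := hu θ ω a
    rw [hr, mul_comm (q ω), ← Rat.smul_def r (q ω), map_smul, smul_eq_mul, Rat.cast_mul, mul_comm]
  have hd := KeepsActive.eq_zero hq (d := fun ω => (ψ (q ω) : ℝ))
    ⟨?_, fun ω h => ?_, fun θ a h => ?_⟩
  · exact hψq (by simpa using congrFun hd ω₀)
  · rw [← Rat.cast_sum, ← map_sum, hq.1.1.2, hψ1, Rat.cast_zero]
  · simp [h]
  · rw [hψ_sum_mul, hψ_sum_mul, h]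

lemma cellPM_eq_inter (u : Θ → Ω → A → ℝ) (α : Θ → A) :
    cellPM u α = stdSimplex ℝ Ω ∩
      ⋂ θ, ⋂ a, {q | ∑ ω, q ω * u θ ω a ≤ ∑ ω, q ω * u θ ω (α θ)} := by
  ext q
  simp [cellPM, IsDist, stdSimplex]

lemma convex_cellPM (u : Θ → Ω → A → ℝ) (α : Θ → A) : Convex ℝ (cellPM u α) := by
  have hlin : ∀ c : Ω → ℝ, IsLinearMap ℝ fun q : Ω → ℝ => q ⬝ᵥ c := fun c =>
    ⟨fun x y => add_dotProduct x y c, fun r x => smul_dotProduct r x c⟩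
  rw [cellPM_eq_inter]
  refine (convex_stdSimplex ℝ Ω).inter (convex_iInter fun θ => convex_iInter fun a => ?_)
  simpa [dotProduct, sub_nonpos, mul_sub] using
    convex_halfSpace_le (hlin fun ω => u θ ω a - u θ ω (α θ)) 0

lemma isCompact_cellPM (u : Θ → Ω → A → ℝ) (α : Θ → A) : IsCompact (cellPM u α) := by
  rw [cellPM_eq_inter]
  exact (isCompact_stdSimplex ℝ Ω).inter_right
    (isClosed_iInter fun θ => isClosed_iInter fun a => isClosed_le (by fun_prop) (by fun_prop))

lemma cellPM_eq_convexHull_extremePoints [Finite Θ] [Finite A] (u : Θ → Ω → A → ℝ)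
    (α : Θ → A) : cellPM u α = convexHull ℝ ((cellPM u α).extremePoints ℝ) := by
  rw [← ((finite_extremePoints_cellPM u α).isCompact_convexHull ℝ).isClosed.closure_eq,
    closure_convexHull_extremePoints (isCompact_cellPM u α) (convex_cellPM u α)]

lemma exists_feasRep_extremePoints [Finite Θ] [Finite A] (hq : q ∈ cellPM u α) :
    ∃ w, FeasRep q w ∧ ∀ p ∈ w.support, p ∈ (cellPM u α).extremePoints ℝ := by
  classical
  have hfin := finite_extremePoints_cellPM u α
  rw [cellPM_eq_convexHull_extremePoints, ← hfin.coe_toFinset, Finset.mem_convexHull'] at hq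
  obtain ⟨wt, hwt_nonneg, hwt_sum, hwt_bary⟩ := hq
  set S := hfin.toFinset
  let w : (Ω → ℝ) →₀ ℝ := Finsupp.indicator S fun p _ => wt p
  have hsupp : w.support ⊆ S := Finsupp.support_indicator_subset _ _
  have hsum : ∀ g : (Ω → ℝ) → ℝ, ∑ p ∈ w.support, w p * g p = ∑ p ∈ S, wt p * g p := by
    intro g
    rw [Finset.sum_subset hsupp fun p _ hp => by rw [Finsupp.notMem_support_iff.1 hp, zero_mul]]
    exact sum_congr rfl fun p hp => by rw [Finsupp.indicator_of_mem hp]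
  have hext : ∀ p ∈ w.support, p ∈ (cellPM u α).extremePoints ℝ := fun p hp =>
    hfin.mem_toFinset.1 (hsupp hp)
  refine ⟨w, ⟨fun p hp => (hext p hp).1.1, fun p => ?_, ?_, fun ω => ?_⟩, hext⟩
  · simp only [w, Finsupp.indicator_apply]
    split_ifs with hp
    exacts [hwt_nonneg p hp, le_rfl]
  · simpa using (hsum fun _ => 1).trans (by simpa using hwt_sum)
  · rw [hsum fun p => p ω, ← congrFun hwt_bary ω, Finset.sum_apply]
    rfl

end Cell

lemma FeasRep.sum_mul_sum_mul {Ω : Type*} [Fintype Ω] {q : Ω → ℝ} {w : (Ω → ℝ) →₀ ℝ}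
    (hw : FeasRep q w) (c : Ω → ℝ) :
    ∑ p ∈ w.support, w p * ∑ ω, p ω * c ω = ∑ ω, q ω * c ω := by
  simp_rw [mul_sum, ← mul_assoc]
  rw [sum_comm]
  simp_rw [← sum_mul, hw.2.2.2]

section Value

variable {Θ Ω A : Type*} [Fintype Ω] [Fintype A] [Nonempty A] {u : Θ → Ω → A → ℝ}

lemma vfun_eq_of_mem_cellPM {α : Θ → A} {q : Ω → ℝ} (hq : q ∈ cellPM u α) (θ : Θ) :
    vfun u θ q = ∑ ω, q ω * u θ ω (α θ) :=
  le_antisymm (sup'_le _ _ fun a _ => hq.2 θ a) (le_sup' (fun a => ∑ ω, q ω * u θ ω a) (mem_univ _))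

lemma vfun_smul (θ : Θ) (q : Ω → ℝ) {c : ℝ} (hc : 0 ≤ c) :
    vfun u θ (c • q) = c * vfun u θ q := by
  simp only [vfun, mul₀_sup' hc, Pi.smul_apply, smul_eq_mul, mul_sum, mul_assoc]

lemma exists_feasRep_Qstar [Finite Θ] (u : Θ → Ω → A → ℝ) {q : Ω → ℝ} (hq : IsDist q) :
    ∃ w, FeasRep q w ∧ (∀ p ∈ w.support, p ∈ Qstar u) ∧
      ∀ θ, ∑ p ∈ w.support, w p * vfun u θ p = vfun u θ q := by
  choose α hα using fun θ => Finite.exists_max fun a => ∑ ω, q ω * u θ ω a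
  have hqα : q ∈ cellPM u α := ⟨hq, hα⟩
  obtain ⟨w, hw, hext⟩ := exists_feasRep_extremePoints hqα
  refine ⟨w, hw, fun p hp => Set.mem_iUnion.2 ⟨α, hext p hp⟩, fun θ => ?_⟩
  rw [vfun_eq_of_mem_cellPM hqα, ← hw.sum_mul_sum_mul]
  exact sum_congr rfl fun p hp => by rw [vfun_eq_of_mem_cellPM (hext p hp).1]

end Value

section Garbling

open Finsupp

variable {ι κ : Type*} {x : ι →₀ ℝ} {W : ι → κ →₀ ℝ}

lemma sum_support_mul_eq_linearCombination (x : ι →₀ ℝ) (g : ι → ℝ) :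
    ∑ i ∈ x.support, x i * g i = linearCombination ℝ g x := by
  simp [linearCombination_apply, Finsupp.sum]

lemma sum_support_linearCombination_mul {g : κ → ℝ} {f : ι → ℝ}
    (h : ∀ i ∈ x.support, ∑ k ∈ (W i).support, W i k * g k = f i) :
    ∑ k ∈ (linearCombination ℝ W x).support, linearCombination ℝ W x k * g k =
      ∑ i ∈ x.support, x i * f i := by
  rw [sum_support_mul_eq_linearCombination, apply_linearCombination,
    ← sum_support_mul_eq_linearCombination]
  exact sum_congr rfl fun i hi => by rw [Function.comp_apply,
    ← sum_support_mul_eq_linearCombination, h i hi]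

lemma linearCombination_apply_nonneg (hx : ∀ i, 0 ≤ x i) (hW : ∀ i ∈ x.support, ∀ k, 0 ≤ W i k)
    (k : κ) : 0 ≤ linearCombination ℝ W x k := by
  rw [linearCombination_apply, Finsupp.sum_apply]
  exact Finset.sum_nonneg fun i hi => mul_nonneg (hx i) (hW i hi k)

lemma exists_mem_support_of_mem_support_linearCombination {k : κ}
    (hk : k ∈ (linearCombination ℝ W x).support) : ∃ i ∈ x.support, k ∈ (W i).support := by
  classical
  rw [linearCombination_apply] at hk
  obtain ⟨i, hi, hk⟩ := Finset.mem_biUnion.1 (support_sum hk)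
  exact ⟨i, hi, support_smul hk⟩

lemma FeasRep.linearCombination {Ω : Type*} [Fintype Ω] {pr : Ω → ℝ} {x : (Ω → ℝ) →₀ ℝ}
    {W : (Ω → ℝ) → (Ω → ℝ) →₀ ℝ} (hx : FeasRep pr x) (hW : ∀ q ∈ x.support, FeasRep q (W q)) :
    FeasRep pr (linearCombination ℝ W x) := by
  refine ⟨fun p hp => ?_, linearCombination_apply_nonneg hx.2.1 fun q hq => (hW q hq).2.1,
    ?_, fun ω => ?_⟩
  · obtain ⟨q, hq, hpq⟩ := exists_mem_support_of_mem_support_linearCombination hp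
    exact (hW q hq).1 p hpq
  · simpa using (sum_support_linearCombination_mul (g := fun _ => 1) (f := fun _ => 1)
      fun q hq => by simpa using (hW q hq).2.2.1).trans (by simpa using hx.2.2.1)
  · simpa only [mul_comm] using (sum_support_linearCombination_mul (g := fun p : Ω → ℝ => p ω)
      fun q hq => (hW q hq).2.2.2 ω).trans (hx.2.2.2 ω)

end Garbling

section Product

variable {Θ Ω A : Type*} [Fintype Θ] [Fintype Ω] [Fintype A] [Nonempty A]
  {u : Θ → Ω → A → ℝ} {μ : Ω → Θ → ℝ}

lemma Dq_eq_smul_of_product (hprod : ∀ ω θ, μ ω θ = margO μ ω * margT μ θ)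
    (hpos : ∀ ω, 0 < margO μ ω) (θ : Θ) (q : Ω → ℝ) : Dq μ θ q = margT μ θ • q := by
  funext ω
  rw [Dq, hprod, mul_div_cancel_left₀ _ (hpos ω).ne', Pi.smul_apply, smul_eq_mul]

lemma PMutil_eq_of_product (hμ : IsJoint μ) (hprod : ∀ ω θ, μ ω θ = margO μ ω * margT μ θ)
    (hpos : ∀ ω, 0 < margO μ ω) (θ : Θ) (x : (Ω → ℝ) →₀ ℝ) :
    PMutil u μ θ x = margT μ θ * ∑ q ∈ x.support, x q * vfun u θ q := by
  have hθ : 0 ≤ margT μ θ := sum_nonneg fun ω _ => hμ.1 ω θ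
  simp only [PMutil, Dq_eq_smul_of_product hprod hpos, vfun_smul _ _ hθ, mul_sum]
  exact sum_congr rfl fun q _ => by ring

end Product

variable {Θ Ω A : Type*}

variable [Fintype Θ] [Fintype Ω] [Fintype A] [Nonempty A]

/-- Interesting posteriors, independent case. `Q*(u)` is a finite set;
for every product distribution `μ` with positive `Ω`-marginal, any valid Pricing Mappings
menu can be replaced by one whose posteriors all lie in `Q*(u)` with at least the same
revenue; and if `u` is rational-valued then every element of `Q*(u)` has rational
coordinates. -/
theorem interesting_posteriors_independent (u : Θ → Ω → A → ℝ) :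
    (Qstar u).Finite ∧
    (∀ μ : Ω → Θ → ℝ, IsJoint μ →
      (∀ ω θ, μ ω θ = margO μ ω * margT μ θ) →
      (∀ ω, 0 < margO μ ω) →
      ∀ x t, PMvalid u μ x t →
        ∃ x' t', PMvalid u μ x' t' ∧
          (∀ θ, ∀ q ∈ (x' θ).support, q ∈ Qstar u) ∧
          PMrev μ t ≤ PMrev μ t') ∧
    ((∀ θ ω a, ∃ r : ℚ, u θ ω a = (r : ℝ)) →
      ∀ q ∈ Qstar u, ∀ ω, ∃ r : ℚ, q ω = (r : ℝ)) := by
  refine ⟨Set.finite_iUnion fun α => finite_extremePoints_cellPM u α,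
    fun μ hμ hprod hpos x t ⟨hfeas, ht, hIR, hIC⟩ => ?_, fun hu q hq ω => ?_⟩
  · choose! W hWfeas hWQ hWv using fun q (hq : IsDist q) => exists_feasRep_Qstar u hq
    have hdist : ∀ θ, ∀ q ∈ (x θ).support, IsDist q := fun θ => (hfeas θ).1
    have hutil : ∀ θ θ', PMutil u μ θ (Finsupp.linearCombination ℝ W (x θ')) =
        PMutil u μ θ (x θ') := fun θ θ' => by
      rw [PMutil_eq_of_product hμ hprod hpos, PMutil_eq_of_product hμ hprod hpos,
        sum_support_linearCombination_mul fun q hq => hWv q (hdist θ' q hq) θ]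
    refine ⟨fun θ => Finsupp.linearCombination ℝ W (x θ), t,
      ⟨fun θ => (hfeas θ).linearCombination fun q hq => hWfeas q (hdist θ q hq), ht,
        fun θ => by simpa only [hutil] using hIR θ,
        fun θ θ' hne => by simpa only [hutil] using hIC θ θ' hne⟩,
      fun θ p hp => ?_, le_rfl⟩
    obtain ⟨q, hq, hpq⟩ := exists_mem_support_of_mem_support_linearCombination hp
    exact hWQ q (hdist θ q hq) p hpq
  · obtain ⟨α, hα⟩ := Set.mem_iUnion.1 hq
    exact exists_ratCast_of_mem_extremePoints_cellPM hu hα ω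
end

section
/- Fix a context (u,μ) with μ(ω) > 0 for all ω ∈ Ω and μ(θ) > 0 for all θ ∈ Θ, and suppose the |Ω| × |Θ| matrix M with entries M(ω,θ) = μ(ω,θ) has rank |Θ|. Then: (i) there exists a vector t ∈ ℝ^Ω with ∑_ω t(ω)·μ(ω,θ) = μ(θ)·σ(θ) for every θ; (ii) for any such t, the Pricing Outcomes menu that gives every type the same full-revelation contract — namely x_θ(δ_ω) = μ(ω) where δ_ω is the point mass at ω, and t̃_θ(δ_ω) = μ(ω)·t(ω) — is valid, every IR constraint holds with equality, and its revenue equals the full surplus ∑_θ μ(θ)·σ(θ); consequently R(u,μ) = ∑_θ μ(θ)·σ(θ). -/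
set_option linter.unusedSectionVars false


open Finset Filter

noncomputable section

variable {Θ Ω A : Type*}

variable [Fintype Θ] [Fintype Ω] [Fintype A] [Nonempty A]

section Helpers

lemma sup'_const_mul {ι : Type*} {s : Finset ι} (h : s.Nonempty) {c : ℝ} (hc : 0 ≤ c)
    (f : ι → ℝ) : c * s.sup' h f = s.sup' h fun a => c * f a := by
  apply le_antisymm
  · obtain ⟨a, ha, he⟩ := Finset.exists_mem_eq_sup' h f
    rw [he]; exact Finset.le_sup' (fun a => c * f a) ha
  · exact Finset.sup'_le _ _ fun a ha => mul_le_mul_of_nonneg_left (Finset.le_sup' f ha) hc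

variable [DecidableEq Ω]

lemma deltaP_inj : Function.Injective (deltaP (Ω := Ω)) := by
  intro a b hab
  by_contra hne
  have h := congrFun hab a
  simp [deltaP, hne] at h

lemma isDist_deltaP [Fintype Ω] (ω : Ω) : IsDist (deltaP ω) := by
  constructor
  · intro ω'; unfold deltaP; split <;> norm_num
  · simp [deltaP]

variable {μ : Ω → Θ → ℝ}

lemma fullX_apply (μ : Ω → Θ → ℝ) (ω : Ω) : fullX μ (deltaP ω) = margO μ ω := by
  unfold fullX
  rw [Finsupp.finset_sum_apply, Finset.sum_eq_single ω]
  · rw [Finsupp.single_apply, if_pos rfl]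
  · intro b _ hb
    rw [Finsupp.single_apply, if_neg (fun h => hb (deltaP_inj h))]
  · simp

lemma fullT_apply (μ : Ω → Θ → ℝ) (t : Ω → ℝ) (ω : Ω) :
    fullT μ t (deltaP ω) = margO μ ω * t ω := by
  unfold fullT
  rw [Finsupp.finset_sum_apply, Finset.sum_eq_single ω]
  · rw [Finsupp.single_apply, if_pos rfl]
  · intro b _ hb
    rw [Finsupp.single_apply, if_neg (fun h => hb (deltaP_inj h))]
  · simp

lemma fullX_apply' (μ : Ω → Θ → ℝ) (q : Ω → ℝ) :
    fullX μ q = ∑ ω, if deltaP ω = q then margO μ ω else 0 := by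
  unfold fullX
  rw [Finsupp.finset_sum_apply]
  exact Finset.sum_congr rfl fun ω _ => Finsupp.single_apply

lemma fullT_support_subset (μ : Ω → Θ → ℝ) (t : Ω → ℝ) :
    (fullT μ t).support ⊆ Finset.univ.image deltaP := by
  refine (Finsupp.support_finset_sum).trans ?_
  intro q hq
  obtain ⟨ω, _, hs⟩ := Finset.mem_biUnion.mp hq
  have := Finsupp.support_single_subset hs
  simp only [Finset.mem_singleton] at this
  subst this
  exact Finset.mem_image_of_mem _ (Finset.mem_univ ω)

lemma fullX_support_eq (hO : ∀ ω, 0 < margO μ ω) :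
    (fullX μ).support = Finset.univ.image deltaP := by
  apply subset_antisymm
  · refine (Finsupp.support_finset_sum).trans ?_
    intro q hq
    obtain ⟨ω, _, hs⟩ := Finset.mem_biUnion.mp hq
    have := Finsupp.support_single_subset hs
    simp only [Finset.mem_singleton] at this
    subst this
    exact Finset.mem_image_of_mem _ (Finset.mem_univ ω)
  · intro q hq
    obtain ⟨ω, _, rfl⟩ := Finset.mem_image.mp hq
    rw [Finsupp.mem_support_iff, fullX_apply]
    exact (hO ω).ne'

lemma margO_nonneg (hnn : ∀ ω θ, 0 ≤ μ ω θ) (ω : Ω) : 0 ≤ margO μ ω :=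
  Finset.sum_nonneg fun θ _ => hnn ω θ

lemma feas_fullX (hnn : ∀ ω θ, 0 ≤ μ ω θ) (hsum : ∑ ω, ∑ θ, μ ω θ = 1)
    (hO : ∀ ω, 0 < margO μ ω) : FeasRep (margO μ) (fullX μ) := by
  refine ⟨?_, ?_, ?_, ?_⟩
  · intro q hq
    rw [fullX_support_eq hO] at hq
    obtain ⟨ω, _, rfl⟩ := Finset.mem_image.mp hq
    exact isDist_deltaP ω
  · intro q
    rw [fullX_apply']
    refine Finset.sum_nonneg fun ω _ => ?_
    split
    · exact margO_nonneg hnn ω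
    · exact le_rfl
  · rw [fullX_support_eq hO, Finset.sum_image (fun a _ b _ h => deltaP_inj h)]
    simp only [fullX_apply]
    rw [← hsum]; rfl
  · intro ω
    rw [fullX_support_eq hO, Finset.sum_image (fun a _ b _ h => deltaP_inj h)]
    simp only [fullX_apply]
    rw [Finset.sum_eq_single ω]
    · simp [deltaP]
    · intro b _ hb; simp [deltaP, Ne.symm hb]
    · simp

lemma Dq_prior (hO : ∀ ω, 0 < margO μ ω) (θ : Θ) (ω : Ω) :
    Dq μ θ (margO μ) ω = μ ω θ := by
  unfold Dq
  exact div_mul_cancel₀ _ (hO ω).ne'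

variable {u : Θ → Ω → A → ℝ}

lemma vfun_prior (hO : ∀ ω, 0 < margO μ ω) (θ : Θ) :
    vfun u θ (Dq μ θ (margO μ)) =
      Finset.univ.sup' Finset.univ_nonempty fun a => ∑ ω, μ ω θ * u θ ω a := by
  unfold vfun
  simp only [Dq_prior hO]

lemma vfun_delta (hnn : ∀ ω θ, 0 ≤ μ ω θ) (hO : ∀ ω, 0 < margO μ ω) (θ : Θ) (ω : Ω) :
    vfun u θ (Dq μ θ (deltaP ω)) = μ ω θ / margO μ ω * maxU u θ ω := by
  have key : ∀ a, ∑ ω', Dq μ θ (deltaP ω) ω' * u θ ω' a = μ ω θ / margO μ ω * u θ ω a := by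
    intro a
    rw [Finset.sum_eq_single ω]
    · simp [Dq, deltaP]
    · intro b _ hb; simp [Dq, deltaP, hb]
    · simp
  unfold vfun
  simp only [key]
  rw [← sup'_const_mul _ (div_nonneg (hnn ω θ) (hO ω).le)]
  rfl

lemma onesD_delta (θ : Θ) (ω : Ω) : onesD μ θ (deltaP ω) = μ ω θ / margO μ ω := by
  unfold onesD
  rw [Finset.sum_eq_single ω]
  · simp [Dq, deltaP]
  · intro b _ hb; simp [Dq, deltaP, hb]
  · simp

lemma margT_surplus {θ : Θ} (hT : 0 < margT μ θ) :
    margT μ θ * surplus u μ θ =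
      ∑ ω, μ ω θ * maxU u θ ω -
        Finset.univ.sup' Finset.univ_nonempty (fun a => ∑ ω, μ ω θ * u θ ω a) := by
  unfold surplus
  rw [mul_sub]
  congr 1
  · rw [Finset.mul_sum]
    refine Finset.sum_congr rfl fun ω _ => ?_
    field_simp
  · rw [sup'_const_mul _ hT.le]
    refine Finset.sup'_congr _ rfl fun a _ => ?_
    rw [Finset.mul_sum]
    refine Finset.sum_congr rfl fun ω _ => ?_
    field_simp

lemma POutil_full (hnn : ∀ ω θ, 0 ≤ μ ω θ) (hO : ∀ ω, 0 < margO μ ω)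
    (θ : Θ) (t : Ω → ℝ) :
    POutil u μ θ (fullX μ) (fullT μ t) =
      ∑ ω, μ ω θ * maxU u θ ω - ∑ ω, μ ω θ * t ω := by
  unfold POutil
  have hcup : (fullX μ).support ∪ (fullT μ t).support = Finset.univ.image deltaP := by
    rw [fullX_support_eq hO]
    exact Finset.union_eq_left.mpr (fullT_support_subset μ t)
  rw [hcup, Finset.sum_image (fun a _ b _ h => deltaP_inj h)]
  rw [← Finset.sum_sub_distrib]
  refine Finset.sum_congr rfl fun ω _ => ?_
  rw [fullX_apply, fullT_apply, vfun_delta hnn hO, onesD_delta]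
  have h := (hO ω).ne'
  field_simp

lemma POrev_full (hO : ∀ ω, 0 < margO μ ω) (t : Ω → ℝ)
    (ht : ∀ θ, ∑ ω, t ω * μ ω θ = margT μ θ * surplus u μ θ) :
    POrev μ (fun _ => fullT μ t) = fullSurplus u μ := by
  unfold POrev fullSurplus
  refine Finset.sum_congr rfl fun θ _ => ?_
  rw [← ht θ]
  rw [Finset.sum_subset (fullT_support_subset μ t)
    (fun q _ hq => by rw [Finsupp.notMem_support_iff.mp hq, mul_zero])]
  rw [Finset.sum_image (fun a _ b _ h => deltaP_inj h)]
  refine Finset.sum_congr rfl fun ω _ => ?_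
  rw [fullT_apply, onesD_delta]
  field_simp [(hO ω).ne']

lemma rev_le (hnn : ∀ ω θ, 0 ≤ μ ω θ) (hO : ∀ ω, 0 < margO μ ω)
    (hT : ∀ θ, 0 < margT μ θ) {x tt : Θ → ((Ω → ℝ) →₀ ℝ)}
    (hv : POvalid u μ x tt) : POrev μ tt ≤ fullSurplus u μ := by
  obtain ⟨hfeas, hsupp, hIR, _⟩ := hv
  unfold POrev fullSurplus
  refine Finset.sum_le_sum fun θ _ => ?_
  have hA : ∑ q ∈ (tt θ).support, onesD μ θ q * tt θ q
      = ∑ q ∈ (x θ).support ∪ (tt θ).support, onesD μ θ q * tt θ q :=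
    Finset.sum_subset Finset.subset_union_right
      (fun q _ hq => by rw [Finsupp.notMem_support_iff.mp hq, mul_zero])
  have hB : ∑ q ∈ (x θ).support ∪ (tt θ).support, vfun u θ (Dq μ θ q) * x θ q
      = ∑ q ∈ (x θ).support, vfun u θ (Dq μ θ q) * x θ q :=
    (Finset.sum_subset Finset.subset_union_left
      (fun q _ hq => by rw [Finsupp.notMem_support_iff.mp hq, mul_zero])).symm
  have hIRθ := hIR θ
  unfold POutil at hIRθ
  rw [Finset.sum_sub_distrib, hB] at hIRθ
  obtain ⟨hdist, hxnn, hsum1, hmean⟩ := hfeas θ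
  have hbound : ∑ q ∈ (x θ).support, vfun u θ (Dq μ θ q) * x θ q ≤ ∑ ω, μ ω θ * maxU u θ ω := by
    calc ∑ q ∈ (x θ).support, vfun u θ (Dq μ θ q) * x θ q
        ≤ ∑ q ∈ (x θ).support, (∑ ω, Dq μ θ q ω * maxU u θ ω) * x θ q := by
          refine Finset.sum_le_sum fun q hq => ?_
          refine mul_le_mul_of_nonneg_right ?_ (hxnn q)
          refine Finset.sup'_le _ _ fun a _ => ?_
          refine Finset.sum_le_sum fun ω _ => ?_
          refine mul_le_mul_of_nonneg_left (Finset.le_sup' _ (Finset.mem_univ a)) ?_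
          exact mul_nonneg (div_nonneg (hnn ω θ) (hO ω).le) ((hdist q hq).1 ω)
      _ = ∑ ω, μ ω θ / margO μ ω * maxU u θ ω * ∑ q ∈ (x θ).support, x θ q * q ω := by
          simp only [Finset.sum_mul]
          rw [Finset.sum_comm]
          refine Finset.sum_congr rfl fun ω _ => ?_
          rw [Finset.mul_sum]
          refine Finset.sum_congr rfl fun q _ => ?_
          simp only [Dq]; ring
      _ = ∑ ω, μ ω θ * maxU u θ ω := by
          refine Finset.sum_congr rfl fun ω _ => ?_
          rw [hmean ω]
          field_simp [(hO ω).ne']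
  rw [margT_surplus (hT θ), hA]
  have hvp := vfun_prior (u := u) hO θ
  linarith



end Helpers


/-- Full surplus extraction, Cremer–McLean style. If the matrix
`[μ(ω,θ)]` has rank `|Θ|`, then (i) there is a payment vector `t` with
`∑_ω t(ω)·μ(ω,θ) = μ(θ)·σ(θ)` for every `θ`; (ii) for any such `t`, the full-revelation
Pricing Outcomes menu giving every type the contract `x_θ(δ_ω) = μ(ω)`,
`t̃_θ(δ_ω) = μ(ω)·t(ω)` is valid with every IR constraint tight and revenue equal to the
full surplus; consequently `R(u,μ)` equals the full surplus. -/
theorem full_surplus_extraction [DecidableEq Ω]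
    (u : Θ → Ω → A → ℝ) (μ : Ω → Θ → ℝ) (hμ : IsJoint μ)
    (hO : ∀ ω, 0 < margO μ ω) (hT : ∀ θ, 0 < margT μ θ)
    (hrank : (Matrix.of fun ω θ => μ ω θ).rank = Fintype.card Θ) :
    (∃ t : Ω → ℝ, ∀ θ, ∑ ω, t ω * μ ω θ = margT μ θ * surplus u μ θ) ∧
    (∀ t : Ω → ℝ, (∀ θ, ∑ ω, t ω * μ ω θ = margT μ θ * surplus u μ θ) →
      POvalid u μ (fun _ => fullX μ) (fun _ => fullT μ t) ∧
      (∀ θ, POutil u μ θ (fullX μ) (fullT μ t) = vfun u θ (Dq μ θ (margO μ))) ∧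
      POrev μ (fun _ => fullT μ t) = fullSurplus u μ) ∧
    Rfull u μ = fullSurplus u μ := by
  obtain ⟨hnn, hsum⟩ := hμ
  have hex : ∃ t : Ω → ℝ, ∀ θ, ∑ ω, t ω * μ ω θ = margT μ θ * surplus u μ θ := by
    set M : Matrix Ω Θ ℝ := Matrix.of fun ω θ => μ ω θ with hM
    have h3 : LinearMap.range (M.transpose.mulVecLin) = ⊤ := by
      apply Submodule.eq_top_of_finrank_eq
      have h2 : M.transpose.rank = Fintype.card Θ := by rw [Matrix.rank_transpose]; exact hrank
      unfold Matrix.rank at h2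
      rw [h2, Module.finrank_fintype_fun_eq_card]
    have hmem : (fun θ => margT μ θ * surplus u μ θ) ∈
        LinearMap.range (M.transpose.mulVecLin) := by rw [h3]; trivial
    obtain ⟨t, ht⟩ := hmem
    refine ⟨t, fun θ => ?_⟩
    have hc := congrFun ht θ
    simpa [Matrix.mulVecLin_apply, Matrix.mulVec, Matrix.vecMul, dotProduct,
      Matrix.transpose_apply, hM, mul_comm] using hc
  have hpart2 : ∀ t : Ω → ℝ, (∀ θ, ∑ ω, t ω * μ ω θ = margT μ θ * surplus u μ θ) →
      POvalid u μ (fun _ => fullX μ) (fun _ => fullT μ t) ∧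
      (∀ θ, POutil u μ θ (fullX μ) (fullT μ t) = vfun u θ (Dq μ θ (margO μ))) ∧
      POrev μ (fun _ => fullT μ t) = fullSurplus u μ := by
    intro t ht
    have htight : ∀ θ, POutil u μ θ (fullX μ) (fullT μ t) = vfun u θ (Dq μ θ (margO μ)) := by
      intro θ
      rw [POutil_full hnn hO, vfun_prior hO]
      have hc : ∑ ω, μ ω θ * t ω = margT μ θ * surplus u μ θ := by
        rw [← ht θ]; exact Finset.sum_congr rfl fun ω _ => mul_comm _ _
      rw [hc, margT_surplus (hT θ)]
      ring
    exact ⟨⟨fun θ => feas_fullX hnn hsum hO,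
      fun θ => by rw [fullX_support_eq hO]; exact fullT_support_subset μ t,
      fun θ => (htight θ).symm.le, fun θ θ' _ => le_rfl⟩, htight, POrev_full hO t ht⟩
  refine ⟨hex, hpart2, ?_⟩
  obtain ⟨t, ht⟩ := hex
  obtain ⟨hval, _, hrev⟩ := hpart2 t ht
  have hmemS : fullSurplus u μ ∈ {r | ∃ x tt, POvalid u μ x tt ∧ r = POrev μ tt} :=
    ⟨_, _, hval, hrev.symm⟩
  have hub : ∀ r ∈ {r | ∃ x tt, POvalid u μ x tt ∧ r = POrev μ tt}, r ≤ fullSurplus u μ := by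
    rintro r ⟨x, tt, hv, rfl⟩
    exact rev_le hnn hO hT hv
  exact le_antisymm (csSup_le ⟨_, hmemS⟩ hub) (le_csSup ⟨_, hub⟩ hmemS)

end
end

section
/- Fix a context (u,μ) with μ(ω) > 0 for all ω ∈ Ω and μ(θ) > 0 for all θ ∈ Θ. Then every valid Pricing Outcomes menu has revenue at most the full surplus ∑_θ μ(θ)·σ(θ); consequently R(u,μ) ≤ ∑_θ μ(θ)·σ(θ). -/
open Finset Filter

noncomputable section

variable {Θ Ω A : Type*}

variable [Fintype Θ] [Fintype Ω] [Fintype A] [Nonempty A]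

lemma aux_sup'_mul_const [Fintype A] [Nonempty A] (c : ℝ) (hc : 0 ≤ c) (f : A → ℝ) :
    c * univ.sup' univ_nonempty f = univ.sup' univ_nonempty fun a => c * f a :=
  Finset.comp_sup'_eq_sup'_comp _ (fun x => c * x) (fun x y => mul_max_of_nonneg x y hc)

lemma aux_mt_surplus (u : Θ → Ω → A → ℝ) (μ : Ω → Θ → ℝ) (θ : Θ) (hT : 0 < margT μ θ) :
    margT μ θ * surplus u μ θ =
      ∑ ω, μ ω θ * maxU u θ ω - univ.sup' univ_nonempty fun a => ∑ ω, μ ω θ * u θ ω a := by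
  unfold surplus
  rw [mul_sub, Finset.mul_sum, aux_sup'_mul_const _ hT.le]
  congr 1
  · exact Finset.sum_congr rfl fun ω _ => by field_simp
  · refine Finset.sup'_congr _ rfl fun a _ => ?_
    rw [Finset.mul_sum]
    exact Finset.sum_congr rfl fun ω _ => by field_simp

lemma aux_surplus_nonneg (u : Θ → Ω → A → ℝ) (μ : Ω → Θ → ℝ) (hμn : ∀ ω θ', 0 ≤ μ ω θ') (θ : Θ)
    (hT : 0 < margT μ θ) : 0 ≤ surplus u μ θ := by
  rw [surplus, sub_nonneg]
  refine Finset.sup'_le _ _ fun a _ => Finset.sum_le_sum fun ω _ => ?_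
  exact mul_le_mul_of_nonneg_left (Finset.le_sup' _ (Finset.mem_univ a))
    (div_nonneg (hμn ω θ) hT.le)

lemma aux_per_type (u : Θ → Ω → A → ℝ) (μ : Ω → Θ → ℝ) (hμn : ∀ ω θ', 0 ≤ μ ω θ')
    (hO : ∀ ω, 0 < margO μ ω) (θ : Θ)
    (hT : 0 < margT μ θ) (x tt : (Ω → ℝ) →₀ ℝ) (hf : FeasRep (margO μ) x)
    (hsub : tt.support ⊆ x.support)
    (hIR : vfun u θ (Dq μ θ (margO μ)) ≤ POutil u μ θ x tt) :
    ∑ q ∈ tt.support, onesD μ θ q * tt q ≤ margT μ θ * surplus u μ θ := by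
  obtain ⟨hdist, hxnn, hsum1, havg⟩ := hf
  have hun : x.support ∪ tt.support = x.support := Finset.union_eq_left.2 hsub
  have hrev : ∑ q ∈ tt.support, onesD μ θ q * tt q
      = ∑ q ∈ x.support, onesD μ θ q * tt q := by
    refine Finset.sum_subset hsub fun q _ hq => ?_
    simp [Finsupp.notMem_support_iff.mp hq]
  have hPO : POutil u μ θ x tt
      = ∑ q ∈ x.support, vfun u θ (Dq μ θ q) * x q - ∑ q ∈ x.support, onesD μ θ q * tt q := by
    rw [POutil, hun, Finset.sum_sub_distrib]
  have key : ∑ q ∈ tt.support, onesD μ θ q * tt q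
      ≤ ∑ q ∈ x.support, vfun u θ (Dq μ θ q) * x q - vfun u θ (Dq μ θ (margO μ)) := by
    rw [hrev]; rw [hPO] at hIR; linarith
  have hbound : ∑ q ∈ x.support, vfun u θ (Dq μ θ q) * x q ≤ ∑ ω, μ ω θ * maxU u θ ω := by
    have h1 : ∀ q ∈ x.support, vfun u θ (Dq μ θ q) * x q
        ≤ (∑ ω, Dq μ θ q ω * maxU u θ ω) * x q := by
      intro q hq
      refine mul_le_mul_of_nonneg_right ?_ (hxnn q)
      refine Finset.sup'_le _ _ fun a _ => Finset.sum_le_sum fun ω _ => ?_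
      have hqnn : 0 ≤ Dq μ θ q ω :=
        mul_nonneg (div_nonneg (hμn ω θ) (hO ω).le) ((hdist q hq).1 ω)
      exact mul_le_mul_of_nonneg_left (Finset.le_sup' _ (Finset.mem_univ a)) hqnn
    calc ∑ q ∈ x.support, vfun u θ (Dq μ θ q) * x q
        ≤ ∑ q ∈ x.support, (∑ ω, Dq μ θ q ω * maxU u θ ω) * x q :=
          Finset.sum_le_sum h1
      _ = ∑ q ∈ x.support, ∑ ω, (μ ω θ / margO μ ω * maxU u θ ω) * (x q * q ω) := by
          refine Finset.sum_congr rfl fun q _ => ?_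
          rw [Finset.sum_mul]
          exact Finset.sum_congr rfl fun ω _ => by rw [Dq]; ring
      _ = ∑ ω, ∑ q ∈ x.support, (μ ω θ / margO μ ω * maxU u θ ω) * (x q * q ω) :=
          Finset.sum_comm
      _ = ∑ ω, (μ ω θ / margO μ ω * maxU u θ ω) * ∑ q ∈ x.support, x q * q ω := by
          exact Finset.sum_congr rfl fun ω _ => (Finset.mul_sum _ _ _).symm
      _ = ∑ ω, μ ω θ * maxU u θ ω := by
          refine Finset.sum_congr rfl fun ω _ => ?_
          rw [havg ω, mul_right_comm, div_mul_cancel₀ _ (hO ω).ne']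
  have hprior : Dq μ θ (margO μ) = fun ω => μ ω θ := by
    funext ω; exact div_mul_cancel₀ _ (hO ω).ne'
  have hv : vfun u θ (Dq μ θ (margO μ))
      = univ.sup' univ_nonempty fun a => ∑ ω, μ ω θ * u θ ω a := by
    rw [vfun, hprior]
  rw [aux_mt_surplus u μ θ hT]
  linarith

/-- Every valid Pricing Outcomes menu has revenue at most the full surplus
`∑_θ μ(θ)·σ(θ)`; consequently `R(u,μ)` is at most the full surplus. -/
theorem revenue_le_full_surplus (u : Θ → Ω → A → ℝ) (μ : Ω → Θ → ℝ)
    (hμ : IsJoint μ) (hO : ∀ ω, 0 < margO μ ω) (hT : ∀ θ, 0 < margT μ θ) :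
    (∀ x tt, POvalid u μ x tt → POrev μ tt ≤ fullSurplus u μ) ∧
    Rfull u μ ≤ fullSurplus u μ := by
  obtain ⟨hμn, -⟩ := hμ
  have main : ∀ x tt, POvalid u μ x tt → POrev μ tt ≤ fullSurplus u μ := by
    rintro x tt ⟨hf, hsub, hIR, -⟩
    rw [POrev, fullSurplus]
    exact Finset.sum_le_sum fun θ _ =>
      aux_per_type u μ hμn hO θ (hT θ) (x θ) (tt θ) (hf θ) (hsub θ) (hIR θ)
  refine ⟨main, ?_⟩
  have hfs : 0 ≤ fullSurplus u μ :=
    Finset.sum_nonneg fun θ _ => mul_nonneg (hT θ).le (aux_surplus_nonneg u μ hμn θ (hT θ))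
  refine Real.sSup_le ?_ hfs
  rintro r ⟨x, tt, hval, rfl⟩
  exact main x tt hval
end
end

section
/- Fix a context (u,μ) with μ(ω) > 0 for all ω. Let {(x_θ, t̃_θ)}_{θ∈Θ} be a valid Pricing Outcomes menu in which all IR constraints hold with strict inequality and all IC constraints IC_{θ,θ'} with (x_θ, t̃_θ) ≠ (x_{θ'}, t̃_{θ'}) hold with strict inequality, and let Q̂ be the union over θ of the supports of the x_θ. Then there exists a valid Pricing Outcomes menu {(x'_θ, t̃_θ)}_{θ∈Θ} with the same payment functions, the same revenue, and x'_θ(q) > 0 for every θ ∈ Θ and every q ∈ Q̂. -/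
open Finset Filter

noncomputable section

variable {Θ Ω A : Type*}

variable [Fintype Θ] [Fintype Ω] [Fintype A] [Nonempty A]

open scoped Topology

/-- Given a valid Pricing Outcomes menu with strict IR constraints and
strict IC constraints between distinct contracts, letting `Q̂` be the union of the supports
of the `x_θ`, there is a valid Pricing Outcomes menu with the same payment functions (hence
the same revenue) whose signal representations put strictly positive probability on every
element of `Q̂`. -/
theorem full_support_modification (u : Θ → Ω → A → ℝ) (μ : Ω → Θ → ℝ)
    (hμ : IsJoint μ) (hO : ∀ ω, 0 < margO μ ω)
    (x tt : Θ → ((Ω → ℝ) →₀ ℝ)) (hvalid : POvalid u μ x tt)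
    (hIR : ∀ θ, vfun u θ (Dq μ θ (margO μ)) < POutil u μ θ (x θ) (tt θ))
    (hIC : ∀ θ θ', θ' ≠ θ → (x θ, tt θ) ≠ (x θ', tt θ') →
      POutil u μ θ (x θ') (tt θ') < POutil u μ θ (x θ) (tt θ)) :
    ∃ x' : Θ → ((Ω → ℝ) →₀ ℝ), POvalid u μ x' tt ∧
      ∀ θ θ'' : Θ, ∀ q ∈ (x θ'').support, 0 < x' θ q := by
  classical
  cases isEmpty_or_nonempty Θ with
  | inl h => exact ⟨x, hvalid, fun θ => (h.false θ).elim⟩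
  | inr hne =>
  obtain ⟨hfeas, hsupp, -, -⟩ := hvalid
  have hn0 : (0:ℝ) < (Fintype.card Θ : ℝ) := by exact_mod_cast Fintype.card_pos
  set S : Finset (Ω → ℝ) := Finset.univ.biUnion (fun θ => (x θ).support) with hSdef
  have hxS : ∀ θ, (x θ).support ⊆ S := by
    intro θ
    rw [hSdef]
    exact Finset.subset_biUnion_of_mem (fun θ => (x θ).support) (Finset.mem_univ θ)
  have htS : ∀ θ, (tt θ).support ⊆ S := fun θ => (hsupp θ).trans (hxS θ)
  have hSmem : ∀ q ∈ S, ∃ θ'', q ∈ (x θ'').support := by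
    intro q hq
    rw [hSdef] at hq
    simp only [Finset.mem_biUnion] at hq
    obtain ⟨θ'', -, h⟩ := hq
    exact ⟨θ'', h⟩
  set xbar : (Ω → ℝ) →₀ ℝ := ((Fintype.card Θ : ℝ))⁻¹ • ∑ φ : Θ, x φ with hxbdef
  have hxbar_apply : ∀ q, xbar q = ((Fintype.card Θ : ℝ))⁻¹ * ∑ φ : Θ, x φ q := by
    intro q
    simp [hxbdef, Finsupp.finset_sum_apply]
  have hxbar_nonneg : ∀ q, 0 ≤ xbar q := by
    intro q
    rw [hxbar_apply]
    exact mul_nonneg (inv_nonneg.mpr hn0.le)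
      (Finset.sum_nonneg fun φ _ => (hfeas φ).2.1 q)
  have hxbarS : xbar.support ⊆ S := by
    intro q hq
    rw [Finsupp.mem_support_iff, hxbar_apply] at hq
    have h2 : ∑ φ : Θ, x φ q ≠ 0 := by
      intro h; rw [h, mul_zero] at hq; exact hq rfl
    obtain ⟨φ, -, hφ⟩ := Finset.exists_ne_zero_of_sum_ne_zero h2
    exact hxS φ (Finsupp.mem_support_iff.mpr hφ)
  have hext : ∀ (y : (Ω → ℝ) →₀ ℝ), y.support ⊆ S → ∀ g : (Ω → ℝ) → ℝ,
      (∀ q, y q = 0 → g q = 0) → ∑ q ∈ y.support, g q = ∑ q ∈ S, g q := by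
    intro y hy g hg
    exact Finset.sum_subset hy fun q _ hq => hg q (Finsupp.notMem_support_iff.mp hq)
  have hx1 : ∀ φ, ∑ q ∈ S, x φ q = 1 := by
    intro φ
    rw [← hext (x φ) (hxS φ) _ (fun q h => h)]
    exact (hfeas φ).2.2.1
  have hxω : ∀ φ ω, ∑ q ∈ S, x φ q * q ω = margO μ ω := by
    intro φ ω
    rw [← hext (x φ) (hxS φ) _ (fun q h => by rw [h, zero_mul])]
    exact (hfeas φ).2.2.2 ω
  have hxbar1 : ∑ q ∈ S, xbar q = 1 := by
    simp only [hxbar_apply]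
    rw [← Finset.mul_sum, Finset.sum_comm]
    simp only [hx1]
    rw [Finset.sum_const, Finset.card_univ, nsmul_eq_mul, mul_one,
      inv_mul_cancel₀ hn0.ne']
  have hxbarω : ∀ ω, ∑ q ∈ S, xbar q * q ω = margO μ ω := by
    intro ω
    have h1 : ∀ q, xbar q * q ω
        = ((Fintype.card Θ : ℝ))⁻¹ * ∑ φ : Θ, x φ q * q ω := by
      intro q; rw [hxbar_apply, mul_assoc, Finset.sum_mul]
    simp only [h1]
    rw [← Finset.mul_sum, Finset.sum_comm]
    simp only [hxω]
    rw [Finset.sum_const, Finset.card_univ, nsmul_eq_mul, ← mul_assoc,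
      inv_mul_cancel₀ hn0.ne', one_mul]
  set X : ℝ → Θ → ((Ω → ℝ) →₀ ℝ) := fun ε θ => (1 - ε) • x θ + ε • xbar with hXdef
  have hX_apply : ∀ ε θ q, X ε θ q = (1 - ε) * x θ q + ε * xbar q := by
    intro ε θ q; simp [hXdef]
  have hXS : ∀ ε θ, (X ε θ).support ⊆ S := by
    intro ε θ q hq
    rw [Finsupp.mem_support_iff, hX_apply] at hq
    by_contra hqS
    have h1 : x θ q = 0 := Finsupp.notMem_support_iff.mp (fun h => hqS (hxS θ h))
    have h2 : xbar q = 0 := Finsupp.notMem_support_iff.mp (fun h => hqS (hxbarS h))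
    rw [h1, h2, mul_zero, mul_zero, add_zero] at hq
    exact hq rfl
  have hPO : ∀ (θ : Θ) (y z : (Ω → ℝ) →₀ ℝ), y.support ⊆ S → z.support ⊆ S →
      POutil u μ θ y z = ∑ q ∈ S, (vfun u θ (Dq μ θ q) * y q - onesD μ θ q * z q) := by
    intro θ y z hy hz
    refine Finset.sum_subset (Finset.union_subset hy hz) fun q _ hq => ?_
    rw [Finset.mem_union, not_or] at hq
    rw [Finsupp.notMem_support_iff.mp hq.1, Finsupp.notMem_support_iff.mp hq.2]
    ring
  set c : Θ → Θ → ℝ := fun θ θ' =>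
    (∑ q ∈ S, vfun u θ (Dq μ θ q) * xbar q)
      - ∑ q ∈ S, vfun u θ (Dq μ θ q) * x θ' q with hc
  have hPOX : ∀ ε θ θ', POutil u μ θ (X ε θ') (tt θ')
      = POutil u μ θ (x θ') (tt θ') + ε * c θ θ' := by
    intro ε θ θ'
    rw [hPO θ (X ε θ') (tt θ') (hXS ε θ') (htS θ'),
      hPO θ (x θ') (tt θ') (hxS θ') (htS θ')]
    have h1 : ∀ q, vfun u θ (Dq μ θ q) * (X ε θ') q - onesD μ θ q * tt θ' q
        = (vfun u θ (Dq μ θ q) * x θ' q - onesD μ θ q * tt θ' q)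
          + ε * (vfun u θ (Dq μ θ q) * xbar q - vfun u θ (Dq μ θ q) * x θ' q) := by
      intro q; rw [hX_apply]; ring
    simp only [h1, hc]
    rw [Finset.sum_add_distrib, ← Finset.mul_sum]
    rw [Finset.sum_sub_distrib, Finset.sum_sub_distrib]
  have hev : ∀ᶠ ε in 𝓝[>] (0:ℝ),
      (∀ θ : Θ, vfun u θ (Dq μ θ (margO μ))
          ≤ POutil u μ θ (x θ) (tt θ) + ε * c θ θ) ∧
      (∀ θ θ' : Θ, θ' ≠ θ →
        POutil u μ θ (x θ') (tt θ') + ε * c θ θ'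
          ≤ POutil u μ θ (x θ) (tt θ) + ε * c θ θ) := by
    refine Filter.Eventually.and ?_ ?_
    · rw [Filter.eventually_all]
      intro θ
      have hcont : Continuous fun ε : ℝ => POutil u μ θ (x θ) (tt θ) + ε * c θ θ := by
        fun_prop
      have htend : Filter.Tendsto (fun ε : ℝ => POutil u μ θ (x θ) (tt θ) + ε * c θ θ)
          (𝓝[>] 0) (𝓝 (POutil u μ θ (x θ) (tt θ))) := by
        have h0 := (hcont.tendsto 0).mono_left (nhdsWithin_le_nhds (s := Set.Ioi (0:ℝ)))
        simpa using h0
      exact (htend.eventually_const_lt (hIR θ)).mono fun ε h => h.le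
    · rw [Filter.eventually_all]
      intro θ
      rw [Filter.eventually_all]
      intro θ'
      by_cases hne' : θ' = θ
      · exact Filter.Eventually.of_forall fun ε h => absurd hne' h
      by_cases hpair : (x θ, tt θ) = (x θ', tt θ')
      · have hx' : x θ = x θ' := congrArg Prod.fst hpair
        have ht' : tt θ = tt θ' := congrArg Prod.snd hpair
        refine Filter.Eventually.of_forall fun ε _ => le_of_eq ?_
        simp only [hc, ← hx', ← ht']
      · have hstrict := hIC θ θ' hne' hpair
        have hcont : Continuous fun ε : ℝ =>
            (POutil u μ θ (x θ) (tt θ) + ε * c θ θ)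
              - (POutil u μ θ (x θ') (tt θ') + ε * c θ θ') := by
          fun_prop
        have htend : Filter.Tendsto (fun ε : ℝ =>
            (POutil u μ θ (x θ) (tt θ) + ε * c θ θ)
              - (POutil u μ θ (x θ') (tt θ') + ε * c θ θ'))
            (𝓝[>] 0)
            (𝓝 (POutil u μ θ (x θ) (tt θ) - POutil u μ θ (x θ') (tt θ'))) := by
          have h0 := (hcont.tendsto 0).mono_left (nhdsWithin_le_nhds (s := Set.Ioi (0:ℝ)))
          simpa using h0
        have hpos : (0:ℝ) < POutil u μ θ (x θ) (tt θ) - POutil u μ θ (x θ') (tt θ') :=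
          sub_pos.mpr hstrict
        exact (htend.eventually_const_lt hpos).mono fun ε h _ => by linarith
  have hIoo : ∀ᶠ ε in 𝓝[>] (0:ℝ), ε ∈ Set.Ioo (0:ℝ) 1 :=
    Ioo_mem_nhdsGT_of_mem ⟨le_refl 0, by norm_num⟩
  obtain ⟨ε, ⟨hε0, hε1⟩, hIR', hIC'⟩ := (hIoo.and hev).exists
  have hXpos : ∀ θ θ'' q, q ∈ (x θ'').support → 0 < X ε θ q := by
    intro θ θ'' q hq
    have hq0 : 0 < x θ'' q :=
      lt_of_le_of_ne ((hfeas θ'').2.1 q) (Ne.symm (Finsupp.mem_support_iff.mp hq))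
    have hb : ((Fintype.card Θ : ℝ))⁻¹ * x θ'' q ≤ xbar q := by
      rw [hxbar_apply]
      exact mul_le_mul_of_nonneg_left
        (Finset.single_le_sum (fun φ _ => (hfeas φ).2.1 q) (Finset.mem_univ θ''))
        (inv_nonneg.mpr hn0.le)
    rw [hX_apply]
    have h1 : 0 ≤ (1 - ε) * x θ q :=
      mul_nonneg (by linarith) ((hfeas θ).2.1 q)
    have h2 : 0 < ε * xbar q :=
      mul_pos hε0 (lt_of_lt_of_le (mul_pos (inv_pos.mpr hn0) hq0) hb)
    linarith
  have hXnn : ∀ θ q, 0 ≤ X ε θ q := by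
    intro θ q
    rw [hX_apply]
    have h1 : 0 ≤ (1 - ε) * x θ q := mul_nonneg (by linarith) ((hfeas θ).2.1 q)
    have h2 : 0 ≤ ε * xbar q := mul_nonneg hε0.le (hxbar_nonneg q)
    linarith
  refine ⟨X ε, ⟨?_, ?_, ?_, ?_⟩, fun θ θ'' q hq => hXpos θ θ'' q hq⟩
  · intro θ
    refine ⟨?_, hXnn θ, ?_, ?_⟩
    · intro q hq
      obtain ⟨θ'', hθ''⟩ := hSmem q (hXS ε θ hq)
      exact (hfeas θ'').1 q hθ''
    · rw [hext (X ε θ) (hXS ε θ) _ (fun q h => h)]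
      calc ∑ q ∈ S, X ε θ q = ∑ q ∈ S, ((1 - ε) * x θ q + ε * xbar q) :=
            Finset.sum_congr rfl fun q _ => hX_apply ε θ q
        _ = (1 - ε) * ∑ q ∈ S, x θ q + ε * ∑ q ∈ S, xbar q := by
            rw [Finset.sum_add_distrib, Finset.mul_sum, Finset.mul_sum]
        _ = 1 := by rw [hx1 θ, hxbar1]; ring
    · intro ω
      rw [hext (X ε θ) (hXS ε θ) _ (fun q h => by rw [h, zero_mul])]
      calc ∑ q ∈ S, X ε θ q * q ω
          = ∑ q ∈ S, ((1 - ε) * (x θ q * q ω) + ε * (xbar q * q ω)) :=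
            Finset.sum_congr rfl fun q _ => by rw [hX_apply]; ring
        _ = (1 - ε) * ∑ q ∈ S, x θ q * q ω + ε * ∑ q ∈ S, xbar q * q ω := by
            rw [Finset.sum_add_distrib, Finset.mul_sum, Finset.mul_sum]
        _ = margO μ ω := by rw [hxω θ ω, hxbarω ω]; ring
  · intro θ q hq
    exact Finsupp.mem_support_iff.mpr (hXpos θ θ q (hsupp θ hq)).ne'
  · intro θ
    rw [hPOX ε θ θ]
    exact hIR' θ
  · intro θ θ' hθ'
    rw [hPOX ε θ θ', hPOX ε θ θ]
    exact hIC' θ θ' hθ'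
end
end

section
/- Fix finite nonempty sets Θ, Ω, A, and let C° be the set of pairs (u,μ) ∈ ℝ^{Θ×Ω×A} × Δ(Ω×Θ) with μ(ω) > 0 for every ω ∈ Ω, equipped with the standard topology. Then the optimal Pricing Mappings revenue R_c : C° → ℝ is continuous. -/
open Finset Filter

/-!
Per unit of its mass, type `θ` values a posterior `q` by `v_θ(D_θ q) / μ(θ) = v^W_θ(q)`, with the
payoff `W = normPayoff u μ`, which is continuous in the context wherever `μ(θ) > 0`.

Take a valid menu for a context and a nearby context. Mix every signal representation with a
small weight `δ` of a fixed posterior so that it averages to the new prior, add the uninformative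
option at price `0`, discount all prices by the factor `1 - s`, and let every type choose its
favourite option. This changes each type's values of the options by some `η = O(δ)`, and the
discount keeps every type from choosing an option cheaper than its old one by more than `2η/s`;
so the revenue drops by `O(s + δ/s)` at most, which is `O(s)` for `δ = s²`. Applied in both
directions, this gives `|R_c(c) - R_c(c₀)| = O(s)` for `c` near `c₀`.
-/

open Topology

theorem Finset.abs_sup'_sub_sup'_le {ι : Type*} {s : Finset ι} (H : s.Nonempty) {f g : ι → ℝ}
    {c : ℝ} (h : ∀ i ∈ s, |f i - g i| ≤ c) : |s.sup' H f - s.sup' H g| ≤ c := by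
  rw [abs_sub_le_iff, sub_le_iff_le_add, sub_le_iff_le_add]
  constructor
  · refine Finset.sup'_le H f fun i hi => ?_
    linarith [(abs_le.1 (h i hi)).2, Finset.le_sup' g hi]
  · refine Finset.sup'_le H g fun i hi => ?_
    linarith [(abs_le.1 (h i hi)).1, Finset.le_sup' f hi]

theorem Finset.abs_sum_mul_le_of_sum_eq_one {ι : Type*} {s : Finset ι} {f w : ι → ℝ} {C : ℝ}
    (hw : ∀ i ∈ s, 0 ≤ w i) (hw1 : ∑ i ∈ s, w i = 1) (hf : ∀ i ∈ s, |f i| ≤ C) :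
    |∑ i ∈ s, f i * w i| ≤ C :=
  calc |∑ i ∈ s, f i * w i| ≤ ∑ i ∈ s, |f i * w i| := abs_sum_le_sum_abs _ _
    _ ≤ ∑ i ∈ s, C * w i := sum_le_sum fun i hi => by
        rw [abs_mul, abs_of_nonneg (hw i hi)]
        exact mul_le_mul_of_nonneg_right (hf i hi) (hw i hi)
    _ = C := by rw [← mul_sum, hw1, mul_one]

variable {Θ Ω A : Type*}

section Marginals

variable [Fintype Θ] [Fintype Ω] {μ : Ω → Θ → ℝ}

theorem margT_nonneg (hμ : IsJoint μ) (θ : Θ) : 0 ≤ margT μ θ :=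
  sum_nonneg fun ω _ => hμ.1 ω θ

theorem sum_margT (hμ : IsJoint μ) : ∑ θ, margT μ θ = 1 := by
  rw [← hμ.2]; exact sum_comm

theorem margT_le_one (hμ : IsJoint μ) (θ : Θ) : margT μ θ ≤ 1 :=
  sum_margT hμ ▸ single_le_sum (fun θ' _ => margT_nonneg hμ θ') (mem_univ θ)

theorem le_margT (hμ : IsJoint μ) (ω : Ω) (θ : Θ) : μ ω θ ≤ margT μ θ :=
  single_le_sum (fun ω' _ => hμ.1 ω' θ) (mem_univ ω)

theorem IsJoint.isDist_margO (hμ : IsJoint μ) : IsDist (margO μ) :=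
  ⟨fun _ => sum_nonneg fun θ _ => hμ.1 _ θ, hμ.2⟩

end Marginals

@[fun_prop]
theorem continuous_margO [Fintype Θ] (ω : Ω) : Continuous fun μ : Ω → Θ → ℝ => margO μ ω := by
  unfold margO; fun_prop

@[fun_prop]
theorem continuous_margT [Fintype Ω] (θ : Θ) : Continuous fun μ : Ω → Θ → ℝ => margT μ θ := by
  unfold margT; fun_prop

section Value

variable [Fintype Ω] [Fintype A] [Nonempty A]

theorem abs_vfun_sub_vfun_le {W W' : Θ → Ω → A → ℝ} {θ : Θ} {q q' : Ω → ℝ} {c : ℝ}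
    (h : ∀ a, |∑ ω, q ω * W θ ω a - ∑ ω, q' ω * W' θ ω a| ≤ c) :
    |vfun W θ q - vfun W' θ q'| ≤ c :=
  abs_sup'_sub_sup'_le _ fun a _ => h a

theorem abs_vfun_sub_vfun_le_of_payoff {W W' : Θ → Ω → A → ℝ} {θ : Θ} {q : Ω → ℝ} {γ : ℝ}
    (hq : IsDist q) (h : ∀ ω a, |W θ ω a - W' θ ω a| ≤ γ) : |vfun W θ q - vfun W' θ q| ≤ γ :=
  abs_vfun_sub_vfun_le fun a => by
    rw [← sum_sub_distrib]
    simp_rw [← mul_sub, mul_comm (q _)]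
    exact abs_sum_mul_le_of_sum_eq_one (fun ω _ => hq.1 ω) hq.2 fun ω _ => h ω a

theorem abs_vfun_le {W : Θ → Ω → A → ℝ} {θ : Θ} {q : Ω → ℝ} {M : ℝ} (hq : IsDist q)
    (h : ∀ ω a, |W θ ω a| ≤ M) : |vfun W θ q| ≤ M := by
  simpa [vfun] using abs_vfun_sub_vfun_le_of_payoff (W' := 0) hq (by simpa using h)

theorem abs_vfun_sub_vfun_le_mul_sum {W : Θ → Ω → A → ℝ} {θ : Θ} {q q' : Ω → ℝ} {M : ℝ}
    (h : ∀ ω a, |W θ ω a| ≤ M) : |vfun W θ q' - vfun W θ q| ≤ M * ∑ ω, |q' ω - q ω| :=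
  abs_vfun_sub_vfun_le fun a =>
    calc |∑ ω, q' ω * W θ ω a - ∑ ω, q ω * W θ ω a| ≤ ∑ ω, |q' ω - q ω| * |W θ ω a| := by
          rw [← sum_sub_distrib]
          simp_rw [← sub_mul, ← abs_mul]
          exact abs_sum_le_sum_abs _ _
      _ ≤ M * ∑ ω, |q' ω - q ω| := by
          rw [mul_sum]
          exact sum_le_sum fun ω _ => by
            rw [mul_comm]; exact mul_le_mul_of_nonneg_right (h ω a) (abs_nonneg _)

end Value

noncomputable def mixRep (e : ℝ) (q₀ : Ω → ℝ) (x : (Ω → ℝ) →₀ ℝ) : (Ω → ℝ) →₀ ℝ :=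
  (1 - e) • x + Finsupp.single q₀ e

theorem sum_mixRep_mul (e : ℝ) (q₀ : Ω → ℝ) (x : (Ω → ℝ) →₀ ℝ) (F : (Ω → ℝ) → ℝ) :
    ∑ q ∈ (mixRep e q₀ x).support, F q * mixRep e q₀ x q
      = (1 - e) * ∑ q ∈ x.support, F q * x q + F q₀ * e := by
  change (mixRep e q₀ x).sum (fun q c => F q * c)
    = (1 - e) * x.sum (fun q c => F q * c) + F q₀ * e
  rw [mixRep, Finsupp.sum_add_index' (fun _ => mul_zero _) (fun _ _ _ => mul_add _ _ _),
    Finsupp.sum_smul_index' (fun _ => mul_zero _), Finsupp.sum_single_index (mul_zero _)]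
  simp only [Finsupp.sum, smul_eq_mul, mul_sum]
  congr 1
  exact sum_congr rfl fun _ _ => by ring

noncomputable def correctionPosterior (e : ℝ) (p p' : Ω → ℝ) : Ω → ℝ :=
  fun ω => (p' ω - (1 - e) * p ω) / e

theorem mix_correctionPosterior {p : Ω → ℝ} {e : ℝ} (he : e ≠ 0) (p' : Ω → ℝ) :
    (fun ω => (1 - e) * p ω + correctionPosterior e p p' ω * e) = p' := by
  funext ω
  simp only [correctionPosterior]
  field_simp
  ring

section Feasibility

variable [Fintype Ω] {p : Ω → ℝ}

theorem feasRep_single (hp : IsDist p) : FeasRep p (Finsupp.single p 1) := by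
  classical
  refine ⟨fun q hq => ?_, fun q => ?_, by simp, fun ω => by simp⟩
  · rwa [Finset.mem_singleton.1 (Finsupp.support_single_subset hq)]
  · rw [Finsupp.single_apply]; split_ifs <;> norm_num

theorem FeasRep.mixRep {x : (Ω → ℝ) →₀ ℝ} (hx : FeasRep p x) {q₀ : Ω → ℝ} (hq₀ : IsDist q₀)
    {e : ℝ} (he0 : 0 ≤ e) (he1 : e ≤ 1) :
    FeasRep (fun ω => (1 - e) * p ω + q₀ ω * e) (mixRep e q₀ x) := by
  classical
  refine ⟨fun q hq => ?_, fun q => ?_, ?_, fun ω => ?_⟩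
  · rcases Finset.mem_union.1 (Finsupp.support_add hq) with h | h
    · exact hx.1 q (Finsupp.support_smul h)
    · rwa [Finset.mem_singleton.1 (Finsupp.support_single_subset h)]
  · rw [_root_.mixRep, Finsupp.add_apply, Finsupp.smul_apply, smul_eq_mul, Finsupp.single_apply]
    have := hx.2.1 q
    split_ifs <;> nlinarith
  · simpa [hx.2.2.1] using sum_mixRep_mul e q₀ x fun _ => 1
  · show _ = (1 - e) * p ω + q₀ ω * e
    rw [← hx.2.2.2 ω]
    simpa only [mul_comm] using sum_mixRep_mul e q₀ x fun q => q ω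

theorem isDist_correctionPosterior {p' : Ω → ℝ} (hp : IsDist p) (hp' : IsDist p') {e : ℝ}
    (he : 0 < e) (hmix : ∀ ω, (1 - e) * p ω ≤ p' ω) : IsDist (correctionPosterior e p p') := by
  refine ⟨fun ω => div_nonneg (sub_nonneg.2 (hmix ω)) he.le, ?_⟩
  simp only [correctionPosterior]
  rw [← sum_div, sum_sub_distrib, ← mul_sum, hp.2, hp'.2]
  field_simp
  ring

end Feasibility

section Payoff

variable [Fintype Θ] [Fintype Ω] {u : Θ → Ω → A → ℝ} {μ : Ω → Θ → ℝ}

noncomputable def normPayoff (u : Θ → Ω → A → ℝ) (μ : Ω → Θ → ℝ) : Θ → Ω → A → ℝ :=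
  fun θ ω a => μ ω θ * u θ ω a / (margT μ θ * margO μ ω)

theorem abs_normPayoff_le (hμ : IsJoint μ) (θ : Θ) (ω : Ω) (a : A) :
    |normPayoff u μ θ ω a| ≤ |u θ ω a| / margO μ ω := by
  have hp := hμ.isDist_margO.1 ω
  rcases (margT_nonneg hμ θ).eq_or_lt with hm | hm
  · simp [normPayoff, ← hm, div_nonneg (abs_nonneg _) hp]
  rw [normPayoff, abs_div, abs_mul, abs_mul, abs_of_nonneg (hμ.1 ω θ), abs_of_pos hm,
    abs_of_nonneg hp, mul_div_mul_comm]
  exact mul_le_of_le_one_left (by positivity) ((div_le_one hm).2 (le_margT hμ ω θ))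

theorem sum_Dq_mul (hμ : IsJoint μ) (θ : Θ) (q : Ω → ℝ) (a : A) :
    ∑ ω, Dq μ θ q ω * u θ ω a = margT μ θ * ∑ ω, q ω * normPayoff u μ θ ω a := by
  rcases (margT_nonneg hμ θ).eq_or_lt with hm | hm
  · have hμθ : ∀ ω, μ ω θ = 0 := fun ω =>
      (sum_eq_zero_iff_of_nonneg fun ω _ => hμ.1 ω θ).1 hm.symm ω (mem_univ ω)
    simp [← hm, Dq, hμθ]
  rw [mul_sum]
  refine sum_congr rfl fun ω _ => ?_
  simp only [Dq, normPayoff]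
  field_simp

variable [Fintype A] [Nonempty A]

theorem vfun_Dq (hμ : IsJoint μ) (θ : Θ) (q : Ω → ℝ) :
    vfun u θ (Dq μ θ q) = margT μ θ * vfun (normPayoff u μ) θ q := by
  simp only [vfun, sum_Dq_mul hμ, mul₀_sup' (margT_nonneg hμ θ)]

end Payoff

section ExpectedValue

variable [Fintype Ω] [Fintype A] [Nonempty A] {W W' : Θ → Ω → A → ℝ} {θ : Θ}

noncomputable def expValue (W : Θ → Ω → A → ℝ) (θ : Θ) (x : (Ω → ℝ) →₀ ℝ) : ℝ :=
  ∑ q ∈ x.support, vfun W θ q * x q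

theorem expValue_single (q : Ω → ℝ) : expValue W θ (Finsupp.single q 1) = vfun W θ q := by
  simp [expValue]

theorem expValue_mixRep (e : ℝ) (q₀ : Ω → ℝ) (x : (Ω → ℝ) →₀ ℝ) :
    expValue W θ (mixRep e q₀ x) = (1 - e) * expValue W θ x + vfun W θ q₀ * e :=
  sum_mixRep_mul e q₀ x _

theorem abs_expValue_le {p : Ω → ℝ} {x : (Ω → ℝ) →₀ ℝ} (hx : FeasRep p x) {M : ℝ}
    (h : ∀ ω a, |W θ ω a| ≤ M) : |expValue W θ x| ≤ M :=
  abs_sum_mul_le_of_sum_eq_one (fun q _ => hx.2.1 q) hx.2.2.1 fun q hq => abs_vfun_le (hx.1 q hq) h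

theorem abs_expValue_sub_expValue_le {p : Ω → ℝ} {x : (Ω → ℝ) →₀ ℝ} (hx : FeasRep p x) {γ : ℝ}
    (h : ∀ ω a, |W θ ω a - W' θ ω a| ≤ γ) : |expValue W θ x - expValue W' θ x| ≤ γ := by
  rw [expValue, expValue, ← sum_sub_distrib]
  simp_rw [← sub_mul]
  exact abs_sum_mul_le_of_sum_eq_one (fun q _ => hx.2.1 q) hx.2.2.1 fun q hq =>
    abs_vfun_sub_vfun_le_of_payoff (hx.1 q hq) h

end ExpectedValue

theorem PMutil_eq [Fintype Θ] [Fintype Ω] [Fintype A] [Nonempty A] {u : Θ → Ω → A → ℝ}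
    {μ : Ω → Θ → ℝ} (hμ : IsJoint μ) (θ : Θ) (x : (Ω → ℝ) →₀ ℝ) :
    PMutil u μ θ x = margT μ θ * expValue (normPayoff u μ) θ x := by
  simp only [PMutil, expValue, vfun_Dq hμ, mul_sum, mul_assoc]

section Menus

variable [Fintype Θ] [Fintype Ω] [Fintype A] [Nonempty A] {u : Θ → Ω → A → ℝ}
  {μ : Ω → Θ → ℝ} {x : Θ → (Ω → ℝ) →₀ ℝ} {t : Θ → ℝ}

theorem PMutil_single (θ : Θ) (q : Ω → ℝ) :
    PMutil u μ θ (Finsupp.single q 1) = vfun u θ (Dq μ θ q) := by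
  simp [PMutil]

theorem PMvalid_null (hμ : IsJoint μ) :
    PMvalid u μ (fun _ => Finsupp.single (margO μ) 1) (fun _ => 0) :=
  ⟨fun _ => feasRep_single hμ.isDist_margO, fun _ => le_rfl, fun θ => by simp [PMutil_single],
    fun _ _ _ => le_rfl⟩

theorem PMutil_sub_le_iff (hμ : IsJoint μ) {θ : Θ} (hm : 0 < margT μ θ)
    {x y : (Ω → ℝ) →₀ ℝ} {a b : ℝ} :
    PMutil u μ θ x - margT μ θ * a ≤ PMutil u μ θ y - margT μ θ * b ↔
      expValue (normPayoff u μ) θ x - a ≤ expValue (normPayoff u μ) θ y - b := by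
  rw [PMutil_eq hμ, PMutil_eq hμ, ← mul_sub, ← mul_sub, mul_le_mul_iff_right₀ hm]

theorem PMvalid.margT_mul_le (h : PMvalid u μ x t) (hμ : IsJoint μ) {θ : Θ} {M : ℝ}
    (hW : ∀ ω a, |normPayoff u μ θ ω a| ≤ M) : margT μ θ * t θ ≤ margT μ θ * (2 * M) := by
  have hIR := h.2.2.1 θ
  rw [vfun_Dq hμ, PMutil_eq hμ] at hIR
  have hE := abs_le.1 (abs_expValue_le (h.1 θ) hW)
  have hv := abs_le.1 (abs_vfun_le hμ.isDist_margO hW)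
  nlinarith [margT_nonneg hμ θ]

theorem PMvalid.PMrev_le (h : PMvalid u μ x t) (hμ : IsJoint μ) {M : ℝ}
    (hW : ∀ θ ω a, |normPayoff u μ θ ω a| ≤ M) : PMrev μ t ≤ 2 * M :=
  calc PMrev μ t ≤ ∑ θ, margT μ θ * (2 * M) := sum_le_sum fun θ _ => h.margT_mul_le hμ (hW θ)
    _ = 2 * M := by rw [← sum_mul, sum_margT hμ, one_mul]

theorem Rc_le_add {u' : Θ → Ω → A → ℝ} {μ' : Ω → Θ → ℝ} (hμ : IsJoint μ) (hμ' : IsJoint μ')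
    {M E : ℝ} (hW' : ∀ θ ω a, |normPayoff u' μ' θ ω a| ≤ M)
    (h : ∀ x t, PMvalid u μ x t → ∃ y r, PMvalid u' μ' y r ∧ PMrev μ t ≤ PMrev μ' r + E) :
    Rc u μ ≤ Rc u' μ' + E := by
  refine csSup_le ⟨_, _, _, PMvalid_null hμ, rfl⟩ ?_
  rintro _ ⟨x, t, hxt, rfl⟩
  obtain ⟨y, r, hyr, hle⟩ := h x t hxt
  have hbdd : BddAbove {r | ∃ y r', PMvalid u' μ' y r' ∧ r = PMrev μ' r'} := by
    refine ⟨2 * M, ?_⟩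
    rintro _ ⟨y, r, hyr, rfl⟩
    exact hyr.PMrev_le hμ' hW'
  have hr : PMrev μ' r ≤ Rc u' μ' := le_csSup hbdd ⟨y, r, hyr, rfl⟩
  linarith

theorem exists_PMvalid_of_options {ι : Type*} [Finite ι] (X : ι → (Ω → ℝ) →₀ ℝ) (T : ι → ℝ)
    (hX : ∀ i, FeasRep (margO μ) (X i)) (hT : ∀ i, 0 ≤ T i) (i₀ : ι)
    (hIR : ∀ θ, vfun u θ (Dq μ θ (margO μ)) ≤ PMutil u μ θ (X i₀) - margT μ θ * T i₀) :
    ∃ σ : Θ → ι, PMvalid u μ (X ∘ σ) (T ∘ σ) ∧ ∀ θ i,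
      PMutil u μ θ (X i) - margT μ θ * T i ≤ PMutil u μ θ (X (σ θ)) - margT μ θ * T (σ θ) := by
  have : Nonempty ι := ⟨i₀⟩
  choose σ hσ using fun θ => Finite.exists_max fun i => PMutil u μ θ (X i) - margT μ θ * T i
  exact ⟨σ, ⟨fun θ => hX _, fun θ => hT _, fun θ => (hIR θ).trans (hσ θ i₀),
    fun θ θ' _ => hσ θ (σ θ')⟩, hσ⟩

noncomputable def withNull (p : Ω → ℝ) (x : Θ → (Ω → ℝ) →₀ ℝ) (o : Option Θ) :
    (Ω → ℝ) →₀ ℝ :=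
  o.elim (Finsupp.single p 1) x

theorem PMvalid.PMutil_withNull_sub_le (h : PMvalid u μ x t) (θ : Θ) (o : Option Θ) :
    PMutil u μ θ (withNull (margO μ) x o) - margT μ θ * o.elim 0 t
      ≤ PMutil u μ θ (x θ) - margT μ θ * t θ := by
  rcases o with _ | β
  · simpa [withNull, PMutil_single] using h.2.2.1 θ
  · rcases eq_or_ne β θ with rfl | hβ
    · exact le_rfl
    · exact h.2.2.2 θ β hβ

theorem PMvalid.elim_price_nonneg (h : PMvalid u μ x t) (o : Option Θ) : 0 ≤ o.elim 0 t := by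
  rcases o with _ | β
  exacts [le_rfl, h.2.1 β]

end Menus

/-- `A₁, A₂` (`B₁, B₂`) are a type's old (new) values of its own option and of the option it picks
once all prices are discounted by the factor `1 - s`: the discount makes every option cheaper than
its own by more than `2η/s` unattractive. -/
theorem le_price_of_perturbed_choice {A₁ A₂ B₁ B₂ t₁ t₂ η s : ℝ} (hs : 0 < s)
    (hA : A₂ - t₂ ≤ A₁ - t₁) (hB₁ : |B₁ - A₁| ≤ η) (hB₂ : |B₂ - A₂| ≤ η)
    (hB : B₁ - (1 - s) * t₁ ≤ B₂ - (1 - s) * t₂) : t₁ - 2 * η / s ≤ t₂ := by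
  rw [sub_le_comm, le_div_iff₀ hs]
  linarith [abs_le.1 hB₁, abs_le.1 hB₂]

theorem mul_sub_mul_le_of_le_price {m m' t t' s η M : ℝ} (hm' : 0 ≤ m') (hm'1 : m' ≤ 1)
    (hs : 0 < s) (hs1 : s ≤ 1) (hη : 0 ≤ η) (ht : 0 ≤ t) (htM : t ≤ 2 * M)
    (ht' : t - 2 * η / s ≤ t') :
    m * t - m' * ((1 - s) * t') ≤ 2 * M * |m' - m| + 2 * s * M + 2 * η / s := by
  have h1 : m' * ((1 - s) * (t - 2 * η / s)) ≤ m' * ((1 - s) * t') := by gcongr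
  have h2 : (m - m') * t ≤ |m' - m| * (2 * M) := by
    rw [← abs_sub_comm]
    exact mul_le_mul (le_abs_self _) htM ht (abs_nonneg _)
  have h3 : m' * (1 - s) * (2 * η / s) ≤ 2 * η / s :=
    mul_le_of_le_one_left (by positivity) (by nlinarith)
  have h4 : s * (m' * t) ≤ s * (2 * M) := mul_le_mul_of_nonneg_left (by nlinarith) hs.le
  nlinarith

theorem feasRep_withNull_mixRep [Fintype Ω] {p p' : Ω → ℝ} (hp : IsDist p) (hp' : IsDist p')
    {e : ℝ} (he : 0 < e) (he1 : e ≤ 1) (hmix : ∀ ω, (1 - e) * p ω ≤ p' ω)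
    {x : Θ → (Ω → ℝ) →₀ ℝ} (hx : ∀ β, FeasRep p (x β)) (o : Option Θ) :
    FeasRep p' (withNull p' (fun β => mixRep e (correctionPosterior e p p') (x β)) o) := by
  rcases o with _ | β
  · exact feasRep_single hp'
  · have hmixed := (hx β).mixRep (isDist_correctionPosterior hp hp' he hmix) he.le he1
    rwa [mix_correctionPosterior he.ne'] at hmixed

theorem abs_expValue_withNull_mixRep_sub_le [Fintype Ω] [Fintype A] [Nonempty A]
    {W W' : Θ → Ω → A → ℝ} {θ : Θ} {p p' q₀ : Ω → ℝ} (hp : IsDist p) (hp' : IsDist p')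
    (hq₀ : IsDist q₀) {x : Θ → (Ω → ℝ) →₀ ℝ} (hx : ∀ β, FeasRep p (x β)) {M e γ d : ℝ}
    (hW : ∀ ω a, |W θ ω a| ≤ M) (hW' : ∀ ω a, |W' θ ω a| ≤ M) (he0 : 0 ≤ e) (he1 : e ≤ 1)
    (hd : ∑ ω, |p' ω - p ω| ≤ d) (hγ : ∀ ω a, |W' θ ω a - W θ ω a| ≤ γ) (o : Option Θ) :
    |expValue W' θ (withNull p' (fun β => mixRep e q₀ (x β)) o) - expValue W θ (withNull p x o)|
      ≤ γ + 2 * e * M + d * M := by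
  have hM : 0 ≤ M := (abs_nonneg _).trans (abs_vfun_le hp hW)
  have hγ0 : 0 ≤ γ := (abs_nonneg _).trans (abs_vfun_sub_vfun_le_of_payoff hp hγ)
  rcases o with _ | β
  · simp only [withNull, Option.elim, expValue_single]
    calc |vfun W' θ p' - vfun W θ p|
        ≤ |vfun W' θ p' - vfun W θ p'| + |vfun W θ p' - vfun W θ p| := abs_sub_le _ _ _
      _ ≤ γ + M * d := add_le_add (abs_vfun_sub_vfun_le_of_payoff hp' hγ)
          ((abs_vfun_sub_vfun_le_mul_sum hW).trans (by gcongr))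
      _ ≤ γ + 2 * e * M + d * M := by nlinarith
  · simp only [withNull, Option.elim, expValue_mixRep]
    have h1 := abs_le.1 (abs_expValue_sub_expValue_le (hx β) hγ)
    have h2 := abs_le.1 (abs_vfun_le hq₀ hW')
    have h3 := abs_le.1 (abs_expValue_le (hx β) hW)
    have hd0 : 0 ≤ d * M := mul_nonneg ((sum_nonneg fun ω _ => abs_nonneg _).trans hd) hM
    rw [abs_le]
    constructor <;> nlinarith [mul_nonneg (sub_nonneg.2 he1) (sub_nonneg.2 h1.1),
      mul_nonneg (sub_nonneg.2 he1) (sub_nonneg.2 h1.2), mul_nonneg he0 (sub_nonneg.2 h2.1),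
      mul_nonneg he0 (sub_nonneg.2 h2.2), mul_nonneg he0 (sub_nonneg.2 h3.1),
      mul_nonneg he0 (sub_nonneg.2 h3.2), mul_nonneg he0 hγ0]

section Nearness

variable [Fintype Θ] [Fintype Ω] {u u' : Θ → Ω → A → ℝ} {μ μ' : Ω → Θ → ℝ}

/-- The bounds on the priors let either prior be written as `(1 - δ)·p + δ·q`, where `p` is the
other prior and `q` a posterior (`correctionPosterior`). -/
def IsNear (δ : ℝ) (u : Θ → Ω → A → ℝ) (μ : Ω → Θ → ℝ) (u' : Θ → Ω → A → ℝ) (μ' : Ω → Θ → ℝ) :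
    Prop :=
  (∀ ω, (1 - δ) * margO μ ω ≤ margO μ' ω ∧ (1 - δ) * margO μ' ω ≤ margO μ ω) ∧
    ∑ ω, |margO μ' ω - margO μ ω| ≤ δ ∧ (∀ θ, |margT μ' θ - margT μ θ| ≤ δ) ∧
    ∀ θ, 0 < margT μ θ → 0 < margT μ' θ → ∀ ω a,
      |normPayoff u' μ' θ ω a - normPayoff u μ θ ω a| ≤ δ

theorem IsNear.symm {δ : ℝ} (h : IsNear δ u μ u' μ') : IsNear δ u' μ' u μ := by
  obtain ⟨hp, hd, hm, hW⟩ := h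
  refine ⟨fun ω => (hp ω).symm, ?_, fun θ => ?_, fun θ hm hm' ω a => ?_⟩
  · simpa only [abs_sub_comm] using hd
  · rw [abs_sub_comm]; exact hm θ
  · rw [abs_sub_comm]; exact hW θ hm' hm ω a

end Nearness

section Transfer

variable [Fintype Θ] [Fintype Ω] [Fintype A] [Nonempty A] {u u' : Θ → Ω → A → ℝ}
  {μ μ' : Ω → Θ → ℝ} {x : Θ → (Ω → ℝ) →₀ ℝ} {t : Θ → ℝ}

theorem margT_mul_sub_le_of_choice (hval : PMvalid u μ x t) (hμ : IsJoint μ) (hμ' : IsJoint μ')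
    {θ : Θ} {M s η : ℝ} (hW : ∀ ω a, |normPayoff u μ θ ω a| ≤ M) (hs : 0 < s) (hs1 : s ≤ 1)
    (hη : 0 ≤ η) {X : Option Θ → (Ω → ℝ) →₀ ℝ} {j : Option Θ}
    (hX : 0 < margT μ θ → 0 < margT μ' θ → ∀ o, |expValue (normPayoff u' μ') θ (X o)
      - expValue (normPayoff u μ) θ (withNull (margO μ) x o)| ≤ η)
    (hj : ∀ o, PMutil u' μ' θ (X o) - margT μ' θ * ((1 - s) * o.elim 0 t)
      ≤ PMutil u' μ' θ (X j) - margT μ' θ * ((1 - s) * j.elim 0 t)) :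
    margT μ θ * t θ - margT μ' θ * ((1 - s) * j.elim 0 t)
      ≤ 2 * M * |margT μ' θ - margT μ θ| + 2 * s * M + 2 * η / s := by
  have hM : 0 ≤ M := (abs_nonneg _).trans (abs_vfun_le hμ.isDist_margO hW)
  have hpaid : 0 ≤ margT μ' θ * ((1 - s) * j.elim 0 t) :=
    mul_nonneg (margT_nonneg hμ' θ) (mul_nonneg (by linarith) (hval.elim_price_nonneg j))
  have htM := hval.margT_mul_le hμ hW
  have hrest : 0 ≤ 2 * s * M + 2 * η / s := by positivity
  rcases (margT_nonneg hμ θ).eq_or_lt with hm | hm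
  · rw [← hm, zero_mul]
    nlinarith [abs_nonneg (margT μ' θ - 0)]
  rcases (margT_nonneg hμ' θ).eq_or_lt with hm' | hm'
  · rw [← hm', zero_sub, abs_neg, abs_of_pos hm]
    nlinarith
  have hA := (PMutil_sub_le_iff hμ hm).1 (hval.PMutil_withNull_sub_le θ j)
  have hB := (PMutil_sub_le_iff hμ' hm').1 (hj (some θ))
  exact mul_sub_mul_le_of_le_price hm'.le (margT_le_one hμ' θ) hs hs1 hη (hval.2.1 θ)
    (le_of_mul_le_mul_left htM hm)
    (le_price_of_perturbed_choice hs hA (hX hm hm' (some θ)) (hX hm hm' j) hB)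

theorem IsNear.exists_PMvalid_PMrev_le {s M : ℝ} (h : IsNear (s ^ 2) u μ u' μ')
    (hμ : IsJoint μ) (hμ' : IsJoint μ') (hW : ∀ θ ω a, |normPayoff u μ θ ω a| ≤ M)
    (hW' : ∀ θ ω a, |normPayoff u' μ' θ ω a| ≤ M) (hs : 0 < s) (hs1 : s ≤ 1)
    (hval : PMvalid u μ x t) :
    ∃ y r, PMvalid u' μ' y r ∧ PMrev μ t ≤ PMrev μ' r + Fintype.card Θ * (s * (10 * M + 2)) := by
  obtain ⟨hmix, hd, hτ, hγ⟩ := h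
  have he : 0 < s ^ 2 := by positivity
  have he1 : s ^ 2 ≤ 1 := pow_le_one₀ hs.le hs1
  have hq₀ : IsDist (correctionPosterior (s ^ 2) (margO μ) (margO μ')) :=
    isDist_correctionPosterior hμ.isDist_margO hμ'.isDist_margO he fun ω => (hmix ω).1
  obtain ⟨σ, hσ, hchoice⟩ := exists_PMvalid_of_options (u := u') _
    (fun o => (1 - s) * o.elim 0 t)
    (feasRep_withNull_mixRep hμ.isDist_margO hμ'.isDist_margO he he1 (fun ω => (hmix ω).1) hval.1)
    (fun o => mul_nonneg (by linarith) (hval.elim_price_nonneg o)) none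
    (fun θ => by simp [withNull, PMutil_single])
  refine ⟨_, _, hσ, ?_⟩
  rw [PMrev, PMrev, ← sub_le_iff_le_add', ← sum_sub_distrib]
  refine (sum_le_card_nsmul univ _ _ fun θ _ => ?_).trans_eq (by rw [card_univ, nsmul_eq_mul])
  have hM : 0 ≤ M := (abs_nonneg _).trans (abs_vfun_le hμ.isDist_margO (hW θ))
  have hloss := margT_mul_sub_le_of_choice (η := s ^ 2 * (1 + 3 * M)) hval hμ hμ' (hW θ) hs hs1
    (by positivity) (fun hm hm' o => (abs_expValue_withNull_mixRep_sub_le hμ.isDist_margO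
      hμ'.isDist_margO hq₀ hval.1 (hW θ) (hW' θ) he.le he1 hd (hγ θ hm hm') o).trans_eq
      (by ring)) (hchoice θ)
  have hη : 2 * (s ^ 2 * (1 + 3 * M)) / s = 2 * s * (1 + 3 * M) := by field_simp
  rw [hη] at hloss
  have hτM : 2 * M * |margT μ' θ - margT μ θ| ≤ 2 * M * s := by
    gcongr
    nlinarith [hτ θ]
  simp only [Function.comp_apply]
  nlinarith

theorem Rc_le_add_of_isNear {s M : ℝ} (h : IsNear (s ^ 2) u μ u' μ')
    (hμ : IsJoint μ) (hμ' : IsJoint μ') (hW : ∀ θ ω a, |normPayoff u μ θ ω a| ≤ M)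
    (hW' : ∀ θ ω a, |normPayoff u' μ' θ ω a| ≤ M) (hs : 0 < s) (hs1 : s ≤ 1) :
    Rc u μ ≤ Rc u' μ' + Fintype.card Θ * (s * (10 * M + 2)) :=
  Rc_le_add hμ hμ' hW' fun _ _ hval => h.exists_PMvalid_PMrev_le hμ hμ' hW hW' hs hs1 hval

end Transfer

section Continuity

variable [Fintype Θ] [Fintype Ω] {c₀ : (Θ → Ω → A → ℝ) × (Ω → Θ → ℝ)}

theorem continuousAt_normPayoff {θ : Θ} {ω : Ω} (hm : 0 < margT c₀.2 θ) (hp : 0 < margO c₀.2 ω)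
    (a : A) :
    ContinuousAt (fun c : (Θ → Ω → A → ℝ) × (Ω → Θ → ℝ) => normPayoff c.1 c.2 θ ω a) c₀ := by
  unfold normPayoff
  fun_prop (disch := exact (mul_pos hm hp).ne')

theorem eventually_isNear [Finite A] (hc₀ : ∀ ω, 0 < margO c₀.2 ω) {δ : ℝ} (hδ : 0 < δ) :
    ∀ᶠ c in 𝓝 c₀, IsNear δ c₀.1 c₀.2 c.1 c.2 := by
  have hsmall : ∀ {f : (Θ → Ω → A → ℝ) × (Ω → Θ → ℝ) → ℝ}, ContinuousAt f c₀ → f c₀ = 0 →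
      ∀ᶠ c in 𝓝 c₀, f c ≤ δ := fun hf h0 => hf.tendsto.eventually_le_const (h0 ▸ hδ)
  refine (((eventually_all.2 fun ω => ?_).and ?_).and ((eventually_all.2 fun θ => ?_).and
    (eventually_all.2 fun θ => ?_))).mono fun c h => ⟨h.1.1, h.1.2, h.2.1, h.2.2⟩
  · have hp := hc₀ ω
    exact ((continuousAt_const.eventually_lt (by fun_prop) (by nlinarith)).and
      ((by fun_prop : ContinuousAt (fun c => (1 - δ) * margO c.2 ω) c₀).eventually_lt
        continuousAt_const (by nlinarith))).mono fun _ h => ⟨h.1.le, h.2.le⟩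
  · exact hsmall (by fun_prop) (by simp)
  · exact hsmall (by fun_prop) (by simp)
  · by_cases hm : 0 < margT c₀.2 θ
    · refine (eventually_all.2 fun ω => eventually_all.2 fun a => ?_).mono fun _ h _ _ => h
      exact hsmall ((continuousAt_normPayoff hm (hc₀ ω) a).sub continuousAt_const).abs (by simp)
    · exact Eventually.of_forall fun _ h => absurd h hm

theorem exists_eventually_abs_normPayoff_le [Fintype A] (hc₀ : ∀ ω, 0 < margO c₀.2 ω) :
    ∃ M, 0 ≤ M ∧ ∀ᶠ c in 𝓝 c₀, IsJoint c.2 → ∀ θ ω a, |normPayoff c.1 c.2 θ ω a| ≤ M := by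
  let F := fun c : (Θ → Ω → A → ℝ) × (Ω → Θ → ℝ) =>
    ∑ z : Θ × Ω × A, |c.1 z.1 z.2.1 z.2.2| / margO c.2 z.2.1
  have hF : ContinuousAt F c₀ := by
    fun_prop (disch := exact (hc₀ _).ne')
  have hF₀ : 0 ≤ F c₀ := sum_nonneg fun z _ => div_nonneg (abs_nonneg _) (hc₀ _).le
  refine ⟨F c₀ + 1, by linarith,
    (hF.eventually_lt continuousAt_const (lt_add_one _)).mono fun c hc hJ θ ω a => ?_⟩
  calc |normPayoff c.1 c.2 θ ω a| ≤ |c.1 θ ω a| / margO c.2 ω := abs_normPayoff_le hJ θ ω a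
    _ ≤ F c := single_le_sum (f := fun z : Θ × Ω × A => |c.1 z.1 z.2.1 z.2.2| / margO c.2 z.2.1)
        (fun z _ => div_nonneg (abs_nonneg _) (hJ.isDist_margO.1 _)) (mem_univ (θ, ω, a))
    _ ≤ F c₀ + 1 := hc.le

end Continuity

variable [Fintype Θ] [Fintype Ω] [Fintype A] [Nonempty A]

/-- The optimal Pricing Mappings revenue `R_c` is continuous on the set
`C°` of contexts whose prior has positive `Ω`-marginal. -/
theorem Rc_continuous :
    ContinuousOn (fun p : (Θ → Ω → A → ℝ) × (Ω → Θ → ℝ) => Rc p.1 p.2)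
      {p | IsJoint p.2 ∧ ∀ ω, 0 < margO p.2 ω} := by
  rintro c₀ ⟨hJ₀, hpos₀⟩
  obtain ⟨M, hM, hW⟩ := exists_eventually_abs_normPayoff_le hpos₀
  rw [ContinuousWithinAt, Metric.tendsto_nhds]
  intro ε hε
  obtain ⟨s, hs, hs1, hsε⟩ : ∃ s, 0 < s ∧ s ≤ 1 ∧ Fintype.card Θ * (s * (10 * M + 2)) < ε := by
    obtain ⟨s, hs, hsε⟩ := exists_pos_mul_lt hε (Fintype.card Θ * (10 * M + 2))
    refine ⟨min s 1, by positivity, min_le_right _ _, lt_of_le_of_lt ?_ hsε⟩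
    rw [mul_left_comm, mul_comm]
    gcongr
    exact min_le_left _ _
  filter_upwards [self_mem_nhdsWithin, nhdsWithin_le_nhds hW,
    nhdsWithin_le_nhds (eventually_isNear hpos₀ (pow_pos hs 2))] with c hc hWc hnear
  have hJ : IsJoint c.2 := hc.1
  have hW₀ := hW.self_of_nhds hJ₀
  have h₁ := Rc_le_add_of_isNear hnear hJ₀ hJ hW₀ (hWc hJ) hs hs1
  have h₂ := Rc_le_add_of_isNear hnear.symm hJ hJ₀ (hWc hJ) hW₀ hs hs1
  rw [Real.dist_eq, abs_sub_lt_iff]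
  constructor <;> linarith
end

section
/- Fix finite nonempty sets Θ, Ω, A, and let C°° be the set of pairs (u,μ) ∈ ℝ^{Θ×Ω×A} × Δ(Ω×Θ) with μ(ω) > 0 for every ω ∈ Ω and μ(θ) > 0 for every θ ∈ Θ, equipped with the standard topology. Then the sealed-envelope revenue R_e : C°° → ℝ is continuous. -/
open Finset Filter

noncomputable section

variable {Θ Ω A : Type*}

variable [Fintype Θ] [Fintype Ω] [Fintype A] [Nonempty A]

/-! ### Auxiliary material for the proof of `Re_continuous` -/

lemma surplus_nonneg' (u : Θ → Ω → A → ℝ) (μ : Ω → Θ → ℝ)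
    (hm : ∀ ω θ, 0 ≤ μ ω θ) {θ : Θ} (ht : 0 < margT μ θ) : 0 ≤ surplus u μ θ := by
  rw [surplus, sub_nonneg]
  apply Finset.sup'_le
  intro a _
  apply Finset.sum_le_sum
  intro ω _
  exact mul_le_mul_of_nonneg_left (Finset.le_sup' _ (mem_univ a))
    (div_nonneg (hm ω θ) ht.le)

/-- A closed-form finite maximum equal to `Re` on the relevant domain. -/
def Gfun (u : Θ → Ω → A → ℝ) (μ : Ω → Θ → ℝ) : ℝ :=
  (univ : Finset Θ).powerset.sup' ⟨∅, by simp⟩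
    (fun S => if h : S.Nonempty then (S.inf' h (surplus u μ)) * ∑ θ ∈ S, margT μ θ else 0)

lemma Re_eq_Gfun (u : Θ → Ω → A → ℝ) (μ : Ω → Θ → ℝ)
    (hm0 : ∀ ω θ, 0 ≤ μ ω θ) (hm : ∀ θ, 0 < margT μ θ) : Re u μ = Gfun u μ := by
  classical
  set f : Finset Θ → ℝ := fun S =>
    if h : S.Nonempty then (S.inf' h (surplus u μ)) * ∑ θ ∈ S, margT μ θ else 0 with hf
  set s : Set ℝ := {r | ∃ t : ℝ, 0 ≤ t ∧
    r = t * ∑ θ, (if 0 < margT μ θ ∧ t ≤ surplus u μ θ then margT μ θ else 0)} with hsdef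
  have hσ : ∀ θ, 0 ≤ surplus u μ θ := fun θ => surplus_nonneg' u μ hm0 (hm θ)
  have key : ∀ r ∈ s, r ≤ Gfun u μ := by
    rintro r ⟨t, ht, rfl⟩
    set S : Finset Θ := univ.filter (fun θ => t ≤ surplus u μ θ) with hS
    have hsum : (∑ θ, (if 0 < margT μ θ ∧ t ≤ surplus u μ θ then margT μ θ else 0))
        = ∑ θ ∈ S, margT μ θ := by
      rw [hS, Finset.sum_filter]
      exact Finset.sum_congr rfl (fun θ _ => by simp [hm θ])
    rw [hsum]
    by_cases h : S.Nonempty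
    · have h1 : t * ∑ θ ∈ S, margT μ θ ≤ (S.inf' h (surplus u μ)) * ∑ θ ∈ S, margT μ θ := by
        apply mul_le_mul_of_nonneg_right
        · exact Finset.le_inf' h _ (fun θ hθ => (Finset.mem_filter.mp hθ).2)
        · exact Finset.sum_nonneg (fun θ _ => (hm θ).le)
      refine h1.trans ?_
      have : f S = (S.inf' h (surplus u μ)) * ∑ θ ∈ S, margT μ θ := by rw [hf]; simp [h]
      rw [← this]
      exact Finset.le_sup' f (Finset.mem_powerset.mpr (Finset.subset_univ S))
    · rw [Finset.not_nonempty_iff_eq_empty.mp h]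
      simp only [Finset.sum_empty, mul_zero]
      have : f ∅ = 0 := by rw [hf]; simp
      rw [← this]
      exact Finset.le_sup' f (Finset.mem_powerset.mpr (Finset.empty_subset _))
  have hne : s.Nonempty := ⟨0 * ∑ θ, (if 0 < margT μ θ ∧ (0:ℝ) ≤ surplus u μ θ
    then margT μ θ else 0), 0, le_rfl, rfl⟩
  have hbdd : BddAbove s := ⟨Gfun u μ, key⟩
  apply le_antisymm
  · exact csSup_le hne key
  · apply Finset.sup'_le
    intro S hS
    by_cases h : S.Nonempty
    · rw [dif_pos h]
      set t : ℝ := S.inf' h (surplus u μ) with htdef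
      have ht0 : 0 ≤ t := Finset.le_inf' h _ (fun θ _ => hσ θ)
      have hmem : t * ∑ θ, (if 0 < margT μ θ ∧ t ≤ surplus u μ θ then margT μ θ else 0) ∈ s :=
        ⟨t, ht0, rfl⟩
      refine le_trans ?_ (le_csSup hbdd hmem : _ ≤ Re u μ)
      apply mul_le_mul_of_nonneg_left ?_ ht0
      have : ∑ θ ∈ S, margT μ θ = ∑ θ, (if θ ∈ S then margT μ θ else 0) := by
        rw [Finset.sum_ite_mem, Finset.univ_inter]
      rw [this]
      apply Finset.sum_le_sum
      intro θ _
      by_cases hθ : θ ∈ S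
      · rw [if_pos hθ, if_pos ⟨hm θ, Finset.inf'_le _ hθ⟩]
      · simp only [hθ, if_false]
        split_ifs with h'
        exacts [(hm θ).le, le_rfl]
    · rw [dif_neg h]
      have hmem : (0:ℝ) ∈ s := ⟨0, le_rfl, by rw [zero_mul]⟩
      exact le_csSup hbdd hmem

/-- The (slightly larger) domain on which we establish continuity. -/
def Dom (Θ Ω A : Type*) [Fintype Θ] [Fintype Ω] :
    Set ((Θ → Ω → A → ℝ) × (Ω → Θ → ℝ)) :=
  {p | (∀ ω θ, 0 ≤ p.2 ω θ) ∧ ∀ θ, 0 < margT p.2 θ}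

lemma contOn_surplus (θ : Θ) :
    ContinuousOn (fun p : (Θ → Ω → A → ℝ) × (Ω → Θ → ℝ) => surplus p.1 p.2 θ)
      (Dom Θ Ω A) := by
  have cμ : ∀ (ω : Ω) (θ : Θ), Continuous fun p : (Θ → Ω → A → ℝ) × (Ω → Θ → ℝ) => p.2 ω θ :=
    fun ω θ => (continuous_apply θ).comp ((continuous_apply ω).comp continuous_snd)
  have cmT : Continuous fun p : (Θ → Ω → A → ℝ) × (Ω → Θ → ℝ) => margT p.2 θ := by
    unfold margT; exact continuous_finset_sum _ fun ω _ => cμ ω θ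
  have hne : ∀ p ∈ Dom Θ Ω A, margT p.2 θ ≠ 0 := fun p hp => (hp.2 θ).ne'
  have cratio : ∀ ω : Ω, ContinuousOn
      (fun p : (Θ → Ω → A → ℝ) × (Ω → Θ → ℝ) => p.2 ω θ / margT p.2 θ) (Dom Θ Ω A) :=
    fun ω => ContinuousOn.div (cμ ω θ).continuousOn cmT.continuousOn hne
  have cu : ∀ (ω : Ω) (a : A),
      Continuous fun p : (Θ → Ω → A → ℝ) × (Ω → Θ → ℝ) => p.1 θ ω a := fun ω a =>
    (continuous_apply a).comp ((continuous_apply ω).comp ((continuous_apply θ).comp continuous_fst))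
  have cmaxU : ∀ ω : Ω, Continuous
      (fun p : (Θ → Ω → A → ℝ) × (Ω → Θ → ℝ) => maxU p.1 θ ω) := by
    intro ω
    unfold maxU
    exact Continuous.finset_sup'_apply (s := (univ : Finset A)) univ_nonempty
      (f := fun a (p : (Θ → Ω → A → ℝ) × (Ω → Θ → ℝ)) => p.1 θ ω a) (fun a _ => cu ω a)
  unfold surplus
  apply ContinuousOn.sub
  · exact continuousOn_finset_sum _ fun ω _ => (cratio ω).mul (cmaxU ω).continuousOn
  · exact ContinuousOn.finset_sup'_apply univ_nonempty fun a _ =>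
      continuousOn_finset_sum _ fun ω _ => (cratio ω).mul (cu ω a).continuousOn

lemma contOn_Gfun :
    ContinuousOn (fun p : (Θ → Ω → A → ℝ) × (Ω → Θ → ℝ) => Gfun p.1 p.2) (Dom Θ Ω A) := by
  have cμ : ∀ (ω : Ω) (θ : Θ), Continuous fun p : (Θ → Ω → A → ℝ) × (Ω → Θ → ℝ) => p.2 ω θ :=
    fun ω θ => (continuous_apply θ).comp ((continuous_apply ω).comp continuous_snd)
  have cmT : ∀ θ : Θ, Continuous fun p : (Θ → Ω → A → ℝ) × (Ω → Θ → ℝ) => margT p.2 θ := by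
    intro θ; unfold margT; exact continuous_finset_sum _ fun ω _ => cμ ω θ
  unfold Gfun
  apply ContinuousOn.finset_sup'_apply
  intro S _
  by_cases h : S.Nonempty
  · simp only [dif_pos h]
    exact (ContinuousOn.finset_inf'_apply h fun θ _ => contOn_surplus θ).mul
      (continuousOn_finset_sum _ fun θ _ => (cmT θ).continuousOn)
  · simp only [dif_neg h]
    exact continuousOn_const

/-- The sealed-envelope revenue `R_e` is continuous on the set `C°°` of
contexts whose prior has positive marginals on both `Ω` and `Θ`. -/
theorem Re_continuous :
    ContinuousOn (fun p : (Θ → Ω → A → ℝ) × (Ω → Θ → ℝ) => Re p.1 p.2)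
      {p | IsJoint p.2 ∧ (∀ ω, 0 < margO p.2 ω) ∧ ∀ θ, 0 < margT p.2 θ} := by
  have hsub : {p : (Θ → Ω → A → ℝ) × (Ω → Θ → ℝ) |
      IsJoint p.2 ∧ (∀ ω, 0 < margO p.2 ω) ∧ ∀ θ, 0 < margT p.2 θ} ⊆ Dom Θ Ω A :=
    fun p hp => ⟨hp.1.1, hp.2.2⟩
  refine ContinuousOn.congr (contOn_Gfun.mono hsub) ?_
  intro p hp
  exact Re_eq_Gfun p.1 p.2 hp.1.1 hp.2.2
end
end
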